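/- A matching M is popular if and only if the subgraph G_M (obtained from G by deleting all edges uv with w_M(uv) = -2) contains none of the following M-alternating structures: (i) an M-alternating cycle containing a blocking edge; (ii) an M-alternating path whose first and last edges are two disjoint blocking edges; (iii) an M-alternating path from an M-unmatched node ending in a blocking edge. -/

import Mathlib

open Finset
open scoped Classical

noncomputable section

/-- A (partial) matching on a graph, given as a symmetric partner function. -/
def IsMatchingOn {W : Type*} (H : SimpleGraph W) (f : W → Option W) : Prop :=
  (∀ v w, f v = some w → f w = some v) ∧ (∀ v w, f v = some w → H.Adj v w)

/-- Number of matched vertices of a partner function. -/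
def msize {W : Type*} [Fintype W] (f : W → Option W) : ℕ :=
  (Finset.univ.filter (fun x => f x ≠ none)).card

/-- f is a maximum-size matching on H. -/
def MaxMatchingOn {W : Type*} [Fintype W] (H : SimpleGraph W) (f : W → Option W) : Prop :=
  IsMatchingOn H f ∧ ∀ g, IsMatchingOn H g → msize g ≤ msize f

variable {V : Type*} [Fintype V] [DecidableEq V]

/-- Rank of a situation (partner or unmatched); smaller is better, being
unmatched is worst (any neighbor is preferred to being unmatched). -/
def rkv (rank : V → V → ℕ) (v : V) : Option V → WithTop ℕ
  | none => ⊤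
  | some w => (rank v w : WithTop ℕ)

/-- vote of v comparing situation s to situation t: +1 if v prefers s, -1 if v prefers t. -/
def vote (rank : V → V → ℕ) (v : V) (s t : Option V) : ℤ :=
  if rkv rank v s < rkv rank v t then 1 else if rkv rank v t < rkv rank v s then -1 else 0

variable (G : SimpleGraph V) (rank : V → V → ℕ)

/-- The preferences are strict (a linear order) on the neighbors of each node. -/
def StrictPrefs : Prop := ∀ u v w, G.Adj u v → G.Adj u w → rank u v = rank u w → v = w

/-- g is more popular than f : strictly more nodes prefer g than prefer f. -/
def MorePopular (g f : V → Option V) : Prop :=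
  (Finset.univ.filter (fun v => rkv rank v (g v) < rkv rank v (f v))).card >
  (Finset.univ.filter (fun v => rkv rank v (f v) < rkv rank v (g v))).card

/-- f is popular: no matching is more popular than f. -/
def PopularM (f : V → Option V) : Prop :=
  ∀ g, IsMatchingOn G g → ¬ MorePopular rank g f

/-- uv is a blocking edge for matching f. -/
def BlockingEdge (f : V → Option V) (u v : V) : Prop :=
  G.Adj u v ∧ f u ≠ some v ∧
    rkv rank u (some v) < rkv rank u (f u) ∧ rkv rank v (some u) < rkv rank v (f v)

/-- Vote based weight of an edge uv. -/
def wE (f : V → Option V) (u v : V) : ℤ :=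
  vote rank u (some v) (f u) + vote rank v (some u) (f v)

/-- Vote based weight of the loop at u. -/
def wL (f : V → Option V) (u : V) : ℤ := if f u = none then 0 else -1

/-- G_M : G minus the edges of weight -2. -/
def GMgraph (f : V → Option V) : SimpleGraph V where
  Adj u v := G.Adj u v ∧ wE rank f u v ≠ -2
  symm := by
    refine ⟨fun u v h => ?_⟩
    refine ⟨h.1.symm, ?_⟩
    have h2 := h.2
    simp only [wE] at h2 ⊢
    omega
  loopless := ⟨fun v h => G.loopless.irrefl v h.1⟩

/-- An M-alternating path p 0, p 1, ..., p n (n edges) in graph H with matching f. -/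
def AltPath {W : Type*} (H : SimpleGraph W) (f : W → Option W) (p : ℕ → W) (n : ℕ) : Prop :=
  (∀ i j, i ≤ n → j ≤ n → p i = p j → i = j) ∧
  (∀ i, i < n → H.Adj (p i) (p (i + 1))) ∧
  (∀ i, i + 1 < n → (f (p i) = some (p (i + 1)) ↔ ¬ f (p (i + 1)) = some (p (i + 2))))

/-- An M-alternating cycle p 0, ..., p n = p 0 (n edges, n even), with
matching edges at odd positions. -/
def AltCycle {W : Type*} (H : SimpleGraph W) (f : W → Option W) (p : ℕ → W) (n : ℕ) : Prop :=
  4 ≤ n ∧ Even n ∧ p n = p 0 ∧ (∀ i j, i < n → j < n → p i = p j → i = j) ∧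
  (∀ i, i < n → H.Adj (p i) (p (i + 1))) ∧
  (∀ i, i < n → (f (p i) = some (p (i + 1)) ↔ Odd i))

/-- Blocking structure (i): an alternating cycle in G_M with a blocking edge. -/
def StructI (f : V → Option V) : Prop :=
  ∃ (p : ℕ → V) (n : ℕ), AltCycle (GMgraph G rank f) f p n ∧
    ∃ i, i < n ∧ BlockingEdge G rank f (p i) (p (i + 1))

/-- Blocking structure (ii): an alternating path in G_M whose first and last
edges are two disjoint blocking edges. -/
def StructII (f : V → Option V) : Prop :=
  ∃ (p : ℕ → V) (n : ℕ), 3 ≤ n ∧ AltPath (GMgraph G rank f) f p n ∧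
    BlockingEdge G rank f (p 0) (p 1) ∧ BlockingEdge G rank f (p (n - 1)) (p n)

/-- Blocking structure (iii): an alternating path in G_M from an unmatched node
ending in a blocking edge. -/
def StructIII (f : V → Option V) : Prop :=
  ∃ (p : ℕ → V) (n : ℕ), 1 ≤ n ∧ AltPath (GMgraph G rank f) f p n ∧ f (p 0) = none ∧
    BlockingEdge G rank f (p (n - 1)) (p n)

/-- Vertex set of the auxiliary graph G_M^* : original nodes, blocking nodes b_v,
star nodes b_S (indexed by the middle node of the star), and the contracted node u. -/
abbrev Vstar (V : Type*) := V ⊕ V ⊕ V ⊕ Unit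

def origV : V → Vstar V := Sum.inl
def bNodeV : V → Vstar V := fun v => Sum.inr (Sum.inl v)
def sNodeV : V → Vstar V := fun v => Sum.inr (Sum.inr (Sum.inl v))
def uNode : Vstar V := Sum.inr (Sum.inr (Sum.inr ()))

/-- v is an endpoint of some blocking edge. -/
def IsBlockEnd (f : V → Option V) (v : V) : Prop := ∃ w, BlockingEdge G rank f v w

/-- v is a leaf node: incident to exactly one blocking edge. -/
def IsLeafNode (f : V → Option V) (v : V) : Prop := ∃! w, BlockingEdge G rank f v w

/-- v is a leaf of a star: a leaf node whose unique blocking neighbor z also has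
another leaf node attached by a blocking edge. -/
def IsStarLeaf (f : V → Option V) (v : V) : Prop :=
  IsLeafNode G rank f v ∧ ∃ z, BlockingEdge G rank f v z ∧
    ∃ v', v' ≠ v ∧ IsLeafNode G rank f v' ∧ BlockingEdge G rank f v' z

/-- The (unique) blocking neighbor of a leaf node. -/
def midOf (f : V → Option V) (v : V) : V :=
  if h : ∃ z, BlockingEdge G rank f v z then h.choose else v

/-- b(v): the auxiliary unmatched node attached to the blocking-edge endpoint v. -/
def bmap (f : V → Option V) (v : V) : Vstar V :=
  if IsStarLeaf G rank f v then sNodeV (midOf G rank f v) else bNodeV v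

/-- Projection of an original node into G_M^*: unmatched nodes are contracted to u. -/
def projV (f : V → Option V) (v : V) : Vstar V :=
  if f v = none then uNode else origV v

/-- Underlying (asymmetric) edge description of G_M^*. -/
def starRel (f : V → Option V) (x y : Vstar V) : Prop :=
  (∃ v w, (GMgraph G rank f).Adj v w ∧ ¬ BlockingEdge G rank f v w ∧
    x = projV f v ∧ y = projV f w) ∨
  (∃ v, IsBlockEnd G rank f v ∧ x = projV f v ∧ y = bmap G rank f v)

/-- The auxiliary graph G_M^*. -/
def GMstar (f : V → Option V) : SimpleGraph (Vstar V) where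
  Adj x y := x ≠ y ∧ (starRel G rank f x y ∨ starRel G rank f y x)
  symm := ⟨fun x y h => ⟨h.1.symm, h.2.symm⟩⟩
  loopless := ⟨fun x h => h.1 rfl⟩

/-- The matching M viewed in G_M^*. -/
def fstar (f : V → Option V) : Vstar V → Option (Vstar V)
  | Sum.inl v => (f v).map Sum.inl
  | _ => none

/-- The dual objective of LP2. -/
def dualObj (α : V → ℝ) (y : Finset V → ℝ) : ℝ :=
  (∑ v, α v) +
    ∑ Z ∈ Finset.univ.filter (fun Z : Finset V => Odd Z.card), ((Z.card - 1 : ℝ) / 2) * y Z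

/-- Feasibility for LP2, the dual of the fractional matching LP with odd set constraints. -/
def DualFeasible (f : V → Option V) (α : V → ℝ) (y : Finset V → ℝ) : Prop :=
  (∀ v w, G.Adj v w →
    (wE rank f v w : ℝ) ≤ α v + α w +
      ∑ Z ∈ Finset.univ.filter (fun Z : Finset V => Odd Z.card ∧ v ∈ Z ∧ w ∈ Z), y Z) ∧
  (∀ v, (wL f v : ℝ) ≤ α v) ∧ (∀ Z, 0 ≤ y Z)

/-- A feasible solution of LP1: a fractional matching of G~ (loops allowed)
satisfying the odd-set constraints.  `x v v` is the value of the loop at v. -/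
def PrimalFeasible (x : V → V → ℝ) : Prop :=
  (∀ v w, x v w = x w v) ∧ (∀ v w, 0 ≤ x v w) ∧
  (∀ v w, v ≠ w → ¬ G.Adj v w → x v w = 0) ∧
  (∀ v, ∑ w, x v w = 1) ∧
  (∀ Z : Finset V, Odd Z.card →
    (∑ v ∈ Z, ∑ w ∈ Z, if v ≠ w then x v w else 0) ≤ (Z.card - 1 : ℝ))

/-- The w_M-value of a fractional matching x of G~. -/
def primalVal (f : V → Option V) (x : V → V → ℝ) : ℝ :=
  (∑ v, ∑ w, if v ≠ w then (wE rank f v w : ℝ) * x v w else 0) / 2 +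
    ∑ v, (wL f v : ℝ) * x v v

/-- A fractional matching of G~ (no odd-set constraints). -/
def FracMatching (x : V → V → ℝ) : Prop :=
  (∀ v w, x v w = x w v) ∧ (∀ v w, 0 ≤ x v w) ∧
  (∀ v w, v ≠ w → ¬ G.Adj v w → x v w = 0) ∧ (∀ v, ∑ w, x v w = 1)

/-- f is fractional popular ("truly popular"): no fractional matching has positive w_M-value. -/
def FracPopular (f : V → Option V) : Prop :=
  ∀ x, FracMatching G x → primalVal rank f x ≤ 0

/-- x is missed by some maximum matching of H (x is in the Gallai-Edmonds set D). -/
def Exposable {W : Type*} [Fintype W] (H : SimpleGraph W) (x : W) : Prop :=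
  ∃ g, MaxMatchingOn H g ∧ g x = none

/-- Reachability inside the set P by a walk of H. -/
def ReachWithin {W : Type*} (H : SimpleGraph W) (P : W → Prop) (x y : W) : Prop :=
  ∃ (p : ℕ → W) (n : ℕ), p 0 = x ∧ p n = y ∧ (∀ i, i ≤ n → P (p i)) ∧ ∀ i, i < n → H.Adj (p i) (p (i + 1))

/-- X: nodes of G_M^* reachable from blocking or star nodes on an alternating path. -/
def ReachX (f : V → Option V) (x : Vstar V) : Prop :=
  ∃ (p : ℕ → Vstar V) (n : ℕ), AltPath (GMstar G rank f) (fstar f) p n ∧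
    (∃ v, IsBlockEnd G rank f v ∧ p 0 = bmap G rank f v) ∧ p n = x

/-- K is a connected component of G_M^*[X ∩ D]. -/
def IsCompXD (f : V → Option V) (K : Finset (Vstar V)) : Prop :=
  K.Nonempty ∧
  (∀ x ∈ K, ReachX G rank f x ∧ Exposable (GMstar G rank f) x) ∧
  (∀ x ∈ K, ∀ y, ReachX G rank f y → Exposable (GMstar G rank f) y →
    (GMstar G rank f).Adj x y → y ∈ K) ∧
  (∀ x ∈ K, ∀ y ∈ K,
    ReachWithin (GMstar G rank f) (fun z => ReachX G rank f z ∧ Exposable (GMstar G rank f) z) x y)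

/-- The α of the dual witness constructed from the Gallai-Edmonds decomposition of G_M^*. -/
def alphaGE (f : V → Option V) (v : V) : ℝ :=
  if ReachX G rank f (origV v) ∧ Exposable (GMstar G rank f) (origV v) then -1
  else if ReachX G rank f (origV v) ∧ ¬ Exposable (GMstar G rank f) (origV v) ∧
      (∃ y, Exposable (GMstar G rank f) y ∧ (GMstar G rank f).Adj (origV v) y) then 1
  else 0

/-- The odd set of original nodes arising from a component K of G_M^*[X∩D]:
original members of K, with a star-node root replaced by the middle node of its star. -/
def ZofK (K : Finset (Vstar V)) : Finset V :=
  Finset.univ.filter (fun v => origV v ∈ K ∨ sNodeV v ∈ K)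

/-- The y of the dual witness constructed from the Gallai-Edmonds decomposition. -/
def yGE (f : V → Option V) (Z : Finset V) : ℝ :=
  if ∃ K, IsCompXD G rank f K ∧ 3 ≤ K.card ∧ Z = ZofK K then 2 else 0

end


section PFaux

variable {V : Type*} [Fintype V] [DecidableEq V] (G : SimpleGraph V) (rank : V → V → ℕ)

lemma PFvote_self (v : V) (s : Option V) : vote rank v s s = 0 := by simp [vote]

lemma PFvote_none (v w : V) : vote rank v none (some w) = -1 := by
  simp [vote, rkv, WithTop.coe_lt_top]

lemma PFvote_range (v : V) (s t : Option V) :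
    vote rank v s t = 1 ∨ vote rank v s t = 0 ∨ vote rank v s t = -1 := by
  unfold vote; split_ifs <;> simp

lemma PFvote_eq_one_iff (v : V) (s t : Option V) :
    vote rank v s t = 1 ↔ rkv rank v s < rkv rank v t := by
  unfold vote; split_ifs with h1 h2
  · simp [h1]
  · constructor
    · intro h; exact absurd h (by norm_num)
    · intro h; exact absurd h h1
  · constructor
    · intro h; exact absurd h (by norm_num)
    · intro h; exact absurd h h1

lemma PFvote_eq_zero (v : V) (s t : Option V) (h : vote rank v s t = 0) :
    rkv rank v s = rkv rank v t := by
  rcases lt_trichotomy (rkv rank v s) (rkv rank v t) with h1 | h1 | h1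
  · exfalso; unfold vote at h; rw [if_pos h1] at h; exact one_ne_zero h
  · exact h1
  · exfalso; unfold vote at h; rw [if_neg (asymm h1), if_pos h1] at h; norm_num at h

variable (f : V → Option V)

lemma PFmsym (hM : IsMatchingOn G f) {u v : V} (h : f u = some v) : f v = some u := hM.1 u v h

/-- vote of u for v against its own partner is zero iff matched to v. -/
lemma PFvote_partner_zero_iff (hstrict : StrictPrefs G rank) (hM : IsMatchingOn G f)
    {u v : V} (hadj : G.Adj u v) : vote rank u (some v) (f u) = 0 ↔ f u = some v := by
  constructor
  · intro h0
    have h := PFvote_eq_zero rank u (some v) (f u) h0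
    cases hfu : f u with
    | none => rw [hfu] at h; simp [rkv] at h
    | some w =>
      rw [hfu] at h
      simp only [rkv] at h
      have : rank u v = rank u w := by exact_mod_cast h
      have hvw := hstrict u v w hadj (hM.2 u w hfu) this
      subst hvw; rfl
  · intro h; rw [h]; exact PFvote_self rank u (some v)

lemma PFwE_f_edge (hM : IsMatchingOn G f) {u v : V} (h : f u = some v) :
    wE rank f u v = 0 := by
  have h2 := PFmsym G f hM h
  unfold wE; rw [h, h2]; simp [PFvote_self]

lemma PFwE_cases (hstrict : StrictPrefs G rank) (hM : IsMatchingOn G f)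
    {u v : V} (hadj : G.Adj u v) :
    wE rank f u v = -2 ∨ wE rank f u v = 0 ∨ wE rank f u v = 2 := by
  by_cases hfu : f u = some v
  · right; left; exact PFwE_f_edge G rank f hM hfu
  · have hfv : f v ≠ some u := fun h => hfu (PFmsym G f hM h)
    have h1 : vote rank u (some v) (f u) ≠ 0 :=
      fun h0 => hfu ((PFvote_partner_zero_iff G rank f hstrict hM hadj).1 h0)
    have h2 : vote rank v (some u) (f v) ≠ 0 :=
      fun h0 => hfv ((PFvote_partner_zero_iff G rank f hstrict hM hadj.symm).1 h0)
    have r1 := PFvote_range rank u (some v) (f u)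
    have r2 := PFvote_range rank v (some u) (f v)
    unfold wE; omega

lemma PFwE_le_two (u v : V) : wE rank f u v ≤ 2 := by
  have r1 := PFvote_range rank u (some v) (f u)
  have r2 := PFvote_range rank v (some u) (f v)
  unfold wE; omega

lemma PFwE_eq_two_iff (hstrict : StrictPrefs G rank) (hM : IsMatchingOn G f)
    {u v : V} (hadj : G.Adj u v) :
    wE rank f u v = 2 ↔ BlockingEdge G rank f u v := by
  constructor
  · intro h
    have r1 := PFvote_range rank u (some v) (f u)
    have r2 := PFvote_range rank v (some u) (f v)
    have h1 : vote rank u (some v) (f u) = 1 := by unfold wE at h; omega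
    have h2 : vote rank v (some u) (f v) = 1 := by unfold wE at h; omega
    rw [PFvote_eq_one_iff] at h1 h2
    refine ⟨hadj, ?_, h1, h2⟩
    intro hc; rw [hc] at h1; exact lt_irrefl _ h1
  · rintro ⟨-, -, h1, h2⟩
    have e1 : vote rank u (some v) (f u) = 1 := (PFvote_eq_one_iff rank u _ _).2 h1
    have e2 : vote rank v (some u) (f v) = 1 := (PFvote_eq_one_iff rank v _ _).2 h2
    unfold wE; omega

lemma PFblocking_symm (hM : IsMatchingOn G f) {u v : V}
    (h : BlockingEdge G rank f u v) : BlockingEdge G rank f v u := by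
  obtain ⟨hadj, hne, h1, h2⟩ := h
  refine ⟨hadj.symm, ?_, h2, h1⟩
  intro hc; exact hne (PFmsym G f hM hc)

/-- Sum-of-votes characterization of MorePopular. -/
lemma PFmorePopular_iff (g : V → Option V) :
    MorePopular rank g f ↔ 0 < ∑ v : V, vote rank v (g v) (f v) := by
  have key : ∑ v : V, vote rank v (g v) (f v)
      = ((Finset.univ.filter (fun v => rkv rank v (g v) < rkv rank v (f v))).card : ℤ)
        - ((Finset.univ.filter (fun v => rkv rank v (f v) < rkv rank v (g v))).card : ℤ) := by
    rw [← Finset.sum_boole, ← Finset.sum_boole, ← Finset.sum_sub_distrib]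
    apply Finset.sum_congr rfl
    intro v _
    unfold vote
    by_cases h1 : rkv rank v (g v) < rkv rank v (f v)
    · rw [if_pos h1, if_pos h1, if_neg (asymm h1)]; norm_num
    · rw [if_neg h1, if_neg h1]
      by_cases h2 : rkv rank v (f v) < rkv rank v (g v)
      · rw [if_pos h2, if_pos h2]; norm_num
      · rw [if_neg h2, if_neg h2]; norm_num
  unfold MorePopular
  rw [key]
  omega

lemma PFsum_shift (n : ℕ) (Gf : ℕ → ℤ) (h0 : Gf n = Gf 0) :
    ∑ k ∈ Finset.range n, Gf (k+1) = ∑ k ∈ Finset.range n, Gf k := by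
  have e1 := Finset.sum_range_succ' Gf n
  have e2 := Finset.sum_range_succ Gf n
  omega

lemma PFsum_rot (F : ℕ → ℤ) (n : ℕ) (hper : ∀ t, F (t + n) = F t) (j : ℕ) :
    ∑ k ∈ Finset.range n, F (k + j) = ∑ k ∈ Finset.range n, F k := by
  induction j with
  | zero => simp
  | succ j ih =>
    rw [← ih]
    have key := PFsum_shift n (fun t => F (t + j))
      (by rw [Nat.add_comm n j, hper j, Nat.zero_add])
    rw [← key]
    apply Finset.sum_congr rfl
    intro k _
    congr 1
    omega

lemma PFsum_pair (A B : ℕ → ℤ) (m : ℕ) (h : ∀ j, j < m → A (2*j) + A (2*j+1) = B j) :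
    ∑ k ∈ Finset.range (2*m), A k = ∑ j ∈ Finset.range m, B j := by
  induction m with
  | zero => simp
  | succ m ih =>
    have h2 : 2*(m+1) = 2*m + 1 + 1 := by ring
    rw [h2, Finset.sum_range_succ, Finset.sum_range_succ, Finset.sum_range_succ]
    rw [ih (fun j hj => h j (by omega)), add_assoc, h m (by omega)]

lemma PFsum_even (F : ℕ → ℤ) (m : ℕ) :
    ∑ k ∈ Finset.range (2*m), (if k % 2 = 0 then F k else 0) = ∑ j ∈ Finset.range m, F (2*j) := by
  apply PFsum_pair
  intro j hj
  have e1 : (2*j) % 2 = 0 := by omega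
  have e2 : (2*j+1) % 2 = 1 := by omega
  simp [e1, e2]

/-- SEG: a window of an alternating walk with no -2 edges has weight ≤ 2, and weight ≤ 0
if it starts at an unmatched node (else it contains structure II or III). -/
lemma PFseg (hstrict : StrictPrefs G rank) (hM : IsMatchingOn G f)
    (noII : ¬ StructII G rank f) (noIII : ¬ StructIII G rank f)
    (p : ℕ → V) (r a b : ℕ) (hr : r < 2)
    (hinj : ∀ i j, a ≤ i → i ≤ b → a ≤ j → j ≤ b → p i = p j → i = j)
    (hadj : ∀ i, a ≤ i → i < b → G.Adj (p i) (p (i+1)))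
    (halt : ∀ i, a ≤ i → i < b → (f (p i) = some (p (i+1)) ↔ i % 2 = r))
    (hno2 : ∀ i, a ≤ i → i < b → wE rank f (p i) (p (i+1)) ≠ -2) :
    (∑ i ∈ Finset.Ico a b, wE rank f (p i) (p (i+1))) ≤ 2 ∧
    (f (p a) = none → (∑ i ∈ Finset.Ico a b, wE rank f (p i) (p (i+1))) ≤ 0) := by
  -- a 2-weight edge is not an f-edge
  have hnf : ∀ x, a ≤ x → x < b → wE rank f (p x) (p (x+1)) = 2 → ¬ (x % 2 = r) := by
    intro x hax hxb w2 hxr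
    have hf := (halt x hax hxb).2 hxr
    rw [PFwE_f_edge G rank f hM hf] at w2
    norm_num at w2
  -- a subwindow path between positions x and y+1
  have hpath : ∀ x y, a ≤ x → x ≤ y → y < b →
      AltPath (GMgraph G rank f) f (fun t => p (x + t)) (y + 1 - x) := by
    intro x y hax hxy hyb
    refine ⟨?_, ?_, ?_⟩
    · intro i j hi hj hpe
      have := hinj (x+i) (x+j) (by omega) (by omega) (by omega) (by omega) hpe
      omega
    · intro i hi
      exact ⟨hadj (x+i) (by omega) (by omega), hno2 (x+i) (by omega) (by omega)⟩
    · intro i hi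
      have e1 := halt (x+i) (by omega) (by omega)
      have e2 := halt (x+i+1) (by omega) (by omega)
      show f (p (x + i)) = some (p (x + i + 1)) ↔ ¬f (p (x + i + 1)) = some (p (x + i + 1 + 1))
      rw [e1, e2]
      omega
  -- two blocking edges give structure II
  have hblk : ∀ x y, a ≤ x → x < y → y < b → wE rank f (p x) (p (x+1)) = 2 →
      wE rank f (p y) (p (y+1)) = 2 → False := by
    intro x y hax hxy hyb w2x w2y
    apply noII
    refine ⟨fun t => p (x + t), y + 1 - x, ?_, hpath x y hax (by omega) hyb, ?_, ?_⟩
    · have h1 := hnf x hax (by omega) w2x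
      have h2 := hnf y (by omega) hyb w2y
      omega
    · show BlockingEdge G rank f (p (x + 0)) (p (x + 1))
      have e0 : x + 0 = x := by omega
      rw [e0]
      exact (PFwE_eq_two_iff G rank f hstrict hM (hadj x hax (by omega))).1 w2x
    · have e1 : x + (y + 1 - x - 1) = y := by omega
      have e2 : x + (y + 1 - x) = y + 1 := by omega
      show BlockingEdge G rank f (p (x + (y + 1 - x - 1))) (p (x + (y + 1 - x)))
      rw [e1, e2]
      exact (PFwE_eq_two_iff G rank f hstrict hM (hadj y (by omega) hyb)).1 w2y
  -- a blocking edge with unmatched start gives structure III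
  have hblk3 : f (p a) = none → ∀ x, a ≤ x → x < b → wE rank f (p x) (p (x+1)) ≠ 2 := by
    intro hnone x hax hxb w2x
    apply noIII
    refine ⟨fun t => p (a + t), x + 1 - a, by omega, hpath a x (le_refl a) hax hxb, ?_, ?_⟩
    · show f (p (a + 0)) = none
      have e0 : a + 0 = a := by omega
      rw [e0, hnone]
    · have e1 : a + (x + 1 - a - 1) = x := by omega
      have e2 : a + (x + 1 - a) = x + 1 := by omega
      show BlockingEdge G rank f (p (a + (x + 1 - a - 1))) (p (a + (x + 1 - a)))
      rw [e1, e2]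
      exact (PFwE_eq_two_iff G rank f hstrict hM (hadj x hax hxb)).1 w2x
  -- the sum equals twice the number of blocking edges
  set Blk := (Finset.Ico a b).filter (fun i => wE rank f (p i) (p (i+1)) = 2) with hBlk
  have hsum : (∑ i ∈ Finset.Ico a b, wE rank f (p i) (p (i+1))) = 2 * (Blk.card : ℤ) := by
    have : (∑ i ∈ Finset.Ico a b, wE rank f (p i) (p (i+1)))
        = ∑ i ∈ Finset.Ico a b, (if wE rank f (p i) (p (i+1)) = 2 then (2:ℤ) else 0) := by
      apply Finset.sum_congr rfl
      intro i hi
      rw [Finset.mem_Ico] at hi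
      rcases PFwE_cases G rank f hstrict hM (hadj i hi.1 hi.2) with h | h | h
      · exact absurd h (hno2 i hi.1 hi.2)
      · rw [h, if_neg (by norm_num)]
      · rw [h, if_pos rfl]
    rw [this, ← Finset.sum_filter, ← hBlk, Finset.sum_const]
    simp [mul_comm]
  constructor
  · rw [hsum]
    have hcard : Blk.card ≤ 1 := by
      by_contra hc
      have hc2 : 1 < Blk.card := by omega
      obtain ⟨x, hx, y, hy, hne⟩ := Finset.one_lt_card.1 hc2
      rw [hBlk, Finset.mem_filter, Finset.mem_Ico] at hx hy
      rcases Nat.lt_or_ge x y with h | h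
      · exact hblk x y hx.1.1 h hy.1.2 hx.2 hy.2
      · exact hblk y x hy.1.1 (by omega) hx.1.2 hy.2 hx.2
    omega
  · intro hnone
    rw [hsum]
    have hcard : Blk.card = 0 := by
      rw [Finset.card_eq_zero, hBlk]
      rw [Finset.filter_eq_empty_iff]
      intro x hx
      rw [Finset.mem_Ico] at hx
      exact hblk3 hnone x hx.1 hx.2
    omega

/-- CUT: any suffix window of an alternating walk has weight ≤ 2, and ≤ 0 if it starts
at an unmatched node. -/
lemma PFcut (hstrict : StrictPrefs G rank) (hM : IsMatchingOn G f)
    (noII : ¬ StructII G rank f) (noIII : ¬ StructIII G rank f)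
    (p : ℕ → V) (r A b : ℕ) (hr : r < 2)
    (hinj : ∀ i j, A ≤ i → i ≤ b → A ≤ j → j ≤ b → p i = p j → i = j)
    (hadj : ∀ i, A ≤ i → i < b → G.Adj (p i) (p (i+1)))
    (halt : ∀ i, A ≤ i → i < b → (f (p i) = some (p (i+1)) ↔ i % 2 = r)) :
    ∀ m a, A ≤ a → a ≤ b → b - a ≤ m →
    (∑ i ∈ Finset.Ico a b, wE rank f (p i) (p (i+1))) ≤ 2 ∧
    (f (p a) = none → (∑ i ∈ Finset.Ico a b, wE rank f (p i) (p (i+1))) ≤ 0) := by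
  intro m
  induction m with
  | zero =>
    intro a hAa hab hm
    have : a = b := by omega
    subst this
    simp
  | succ m ih =>
    intro a hAa hab hm
    by_cases hex : ∃ j, (a ≤ j ∧ j < b) ∧ wE rank f (p j) (p (j+1)) = -2
    · have hspec := Nat.find_spec hex
      set j := Nat.find hex with hj
      obtain ⟨⟨haj, hjb⟩, hw2⟩ := hspec
      have hseg := PFseg G rank f hstrict hM noII noIII p r a j hr
        (fun i i' h1 h2 h3 h4 h5 => hinj i i' (by omega) (by omega) (by omega) (by omega) h5)
        (fun i h1 h2 => hadj i (by omega) (by omega))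
        (fun i h1 h2 => halt i (by omega) (by omega))
        (fun i h1 h2 hcon => Nat.find_min hex (show i < Nat.find hex by omega) ⟨⟨h1, by omega⟩, hcon⟩)
      have hih := ih (j+1) (by omega) (by omega) (by omega)
      have hsplit : (∑ i ∈ Finset.Ico a b, wE rank f (p i) (p (i+1)))
          = (∑ i ∈ Finset.Ico a j, wE rank f (p i) (p (i+1)))
            + (∑ i ∈ Finset.Ico j b, wE rank f (p i) (p (i+1))) :=
        (Finset.sum_Ico_consecutive _ haj (by omega)).symm
      have hbot : (∑ i ∈ Finset.Ico j b, wE rank f (p i) (p (i+1)))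
          = wE rank f (p j) (p (j+1)) + (∑ i ∈ Finset.Ico (j+1) b, wE rank f (p i) (p (i+1))) :=
        Finset.sum_eq_sum_Ico_succ_bot hjb _
      constructor
      · have e1 := hseg.1
        have e2 := hih.1
        rw [hsplit, hbot, hw2]
        linarith
      · intro hnone
        have e1 := hseg.2 hnone
        have e2 := hih.1
        rw [hsplit, hbot, hw2]
        linarith
    · exact PFseg G rank f hstrict hM noII noIII p r a b hr
        (fun i i' h1 h2 h3 h4 h5 => hinj i i' (by omega) h2 (by omega) h4 h5)
        (fun i h1 h2 => hadj i (by omega) h2)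
        (fun i h1 h2 => halt i (by omega) h2)
        (fun i h1 h2 hcon => hex ⟨i, ⟨h1, h2⟩, hcon⟩)

end PFaux

/-- Alternating chain: iterate the partner maps mm 0, mm 1, mm 2, ... from v0. -/
def PFchain {V : Type*} (mm : ℕ → V → Option V) (v0 : V) : ℕ → Option V
  | 0 => some v0
  | (k+1) => (PFchain mm v0 k).bind (mm k)

section PFchainSec

variable {V : Type*} [Fintype V] [DecidableEq V] (mm : ℕ → V → Option V) (v0 : V)

lemma PFchain_zero : PFchain mm v0 0 = some v0 := rfl

lemma PFchain_succ (k : ℕ) : PFchain mm v0 (k+1) = (PFchain mm v0 k).bind (mm k) := rfl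

lemma PFchain_succ_some {k : ℕ} {w : V} :
    PFchain mm v0 (k+1) = some w ↔
      ∃ u, PFchain mm v0 k = some u ∧ mm k u = some w := by
  rw [PFchain_succ]
  cases h : PFchain mm v0 k <;> simp [h]

lemma PFchain_none_add (k d : ℕ) (h : PFchain mm v0 k = none) :
    PFchain mm v0 (k + d) = none := by
  induction d with
  | zero => exact h
  | succ d ih => rw [← Nat.add_assoc, PFchain_succ, ih]; rfl

lemma PFchain_ne_none_mono {i j : ℕ} (hij : i ≤ j) (h : PFchain mm v0 j ≠ none) :
    PFchain mm v0 i ≠ none := by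
  intro hc
  exact h (by have := PFchain_none_add mm v0 i (j - i) hc; rwa [Nat.add_sub_cancel' hij] at this)

variable (hsym : ∀ k u w, mm k w = some u → mm k u = some w)
variable (hirr : ∀ k u, mm k u ≠ some u)
variable (hpar : ∀ k k', k % 2 = k' % 2 → mm k = mm k')
variable (hne : ∀ w, ¬ (mm 0 v0 = some w ∧ mm 1 v0 = some w))

include hsym hirr hpar hne in
/-- The structure of the first revisit of an alternating chain: it closes a cycle at v0,
of even length ≥ 4. -/
lemma PFchain_revisit (j : ℕ)
    (hmin : ∀ i' j', i' < j' → j' < j → ∀ u', PFchain mm v0 i' = some u' →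
      PFchain mm v0 j' = some u' → False)
    (i : ℕ) (u : V) (hij : i < j) (hci : PFchain mm v0 i = some u)
    (hcj : PFchain mm v0 j = some u) :
    i = 0 ∧ j % 2 = 0 ∧ 4 ≤ j ∧ ∃ w, PFchain mm v0 (j-1) = some w ∧ mm 1 v0 = some w := by
  obtain ⟨j', rfl⟩ : ∃ j', j = j' + 1 := ⟨j - 1, by omega⟩
  obtain ⟨w, hw, hmw⟩ := (PFchain_succ_some mm v0).1 hcj
  have hin : mm j' u = some w := hsym j' u w hmw
  rcases Nat.eq_zero_or_pos i with hi0 | hipos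
  · -- i = 0 : u = v0
    subst hi0
    have huv : u = v0 := by
      rw [PFchain_zero] at hci
      exact (Option.some.inj hci).symm
    rw [huv] at hin
    rcases Nat.mod_two_eq_zero_or_one j' with hj' | hj'
    · -- incoming map has parity 0 : impossible
      exfalso
      have hmm0 : mm j' = mm 0 := hpar j' 0 (by omega)
      rw [hmm0] at hin
      have hch1 : PFchain mm v0 1 = some w := by
        rw [PFchain_succ, PFchain_zero]
        exact hin
      rcases lt_trichotomy 1 j' with h1 | h1 | h1
      · exact hmin 1 j' h1 (by omega) w hch1 hw
      · omega
      · -- j' = 0 : j = 1, mm 0 v0 = some v0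
        have hj0 : j' = 0 := by omega
        subst hj0
        rw [PFchain_zero] at hw
        have hwv : v0 = w := Option.some.inj hw
        rw [← hwv] at hin
        exact hirr 0 v0 hin
    · -- incoming map has parity 1 : cycle closes properly
      have hmm1 : mm j' = mm 1 := hpar j' 1 (by omega)
      rw [hmm1] at hin
      refine ⟨rfl, by omega, ?_, w, by simpa using hw, hin⟩
      -- rule out j = 2
      by_contra hlt
      have hj2 : j' = 1 := by omega
      subst hj2
      have hm0 : mm 0 v0 = some w := by
        rw [PFchain_succ, PFchain_zero] at hw; exact hw
      exact hne w ⟨hm0, hin⟩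
  · -- i ≥ 1
    obtain ⟨i'', rfl⟩ : ∃ i'', i = i'' + 1 := ⟨i - 1, by omega⟩
    obtain ⟨z, hz, hmz⟩ := (PFchain_succ_some mm v0).1 hci
    have hinz : mm i'' u = some z := hsym i'' u z hmz
    rcases (show j' % 2 = i'' % 2 ∨ j' % 2 = (i''+1) % 2 by omega) with hp | hp
    · exfalso
      have heq : mm j' = mm i'' := hpar j' i'' hp
      rw [heq] at hin
      have hwz : z = w := by rw [hin] at hinz; exact Option.some.inj hinz.symm
      rw [hwz] at hz
      exact hmin i'' j' (by omega) (by omega) w hz hw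
    · exfalso
      have hmmeq : mm j' = mm (i''+1) := hpar j' (i''+1) hp
      rw [hmmeq] at hin
      have hch2 : PFchain mm v0 (i''+1+1) = some w := by
        rw [PFchain_succ, hci]
        exact hin
      rcases lt_trichotomy (i''+1+1) j' with h1 | h1 | h1
      · exact hmin (i''+1+1) j' h1 (by omega) w hch2 hw
      · omega
      · -- i''+1 = j'
        have hieq : i'' + 1 = j' := by omega
        rw [hieq] at hci
        rw [hci] at hw
        have huw : u = w := Option.some.inj hw
        rw [← huw] at hin
        exact hirr (i''+1) u hin

include hsym hirr hpar in
/-- If the next map at v0 is blocked, the chain never revisits a vertex. -/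
lemma PFchain_inj (hstart : mm 1 v0 = none) :
    ∀ j i u, i < j → PFchain mm v0 i = some u → PFchain mm v0 j = some u → False := by
  intro j
  induction j using Nat.strong_induction_on with
  | _ j IH =>
    intro i u hij hci hcj
    have hmin : ∀ i' j', i' < j' → j' < j → ∀ u', PFchain mm v0 i' = some u' →
        PFchain mm v0 j' = some u' → False :=
      fun i' j' h1 h2 u' a b => IH j' h2 i' u' h1 a b
    have hne : ∀ w, ¬ (mm 0 v0 = some w ∧ mm 1 v0 = some w) := by
      intro w ⟨_, h1⟩; rw [hstart] at h1; exact nomatch h1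
    obtain ⟨-, -, -, w, -, hm1⟩ :=
      PFchain_revisit mm v0 hsym hirr hpar hne j hmin i u hij hci hcj
    rw [hstart] at hm1; exact nomatch hm1

lemma PFchain_pigeon (hall : ∀ k, PFchain mm v0 k ≠ none) :
    ∃ j, 0 < j ∧ ∃ i, i < j ∧ PFchain mm v0 i = PFchain mm v0 j := by
  have hcard : Fintype.card V < Fintype.card (Fin (Fintype.card V + 1)) := by simp
  obtain ⟨x, y, hxy, hFeq⟩ :=
    Fintype.exists_ne_map_eq_of_card_lt
      (fun k : Fin (Fintype.card V + 1) => (PFchain mm v0 k).getD v0) hcard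
  have key : PFchain mm v0 x = PFchain mm v0 y := by
    cases hx : PFchain mm v0 x with
    | none => exact absurd hx (hall x)
    | some a =>
      cases hy : PFchain mm v0 y with
      | none => exact absurd hy (hall y)
      | some b => rw [hx, hy] at hFeq; simp at hFeq; rw [hFeq]
  rcases lt_or_gt_of_ne (fun h : (x:ℕ) = (y:ℕ) => hxy (Fin.ext h)) with h | h
  · exact ⟨y, by omega, x, h, key⟩
  · exact ⟨x, by omega, y, h, key.symm⟩

end PFchainSec

section PFaux2

variable {V : Type*} [Fintype V] [DecidableEq V] (G : SimpleGraph V) (rank : V → V → ℕ)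
variable (f : V → Option V)

/-- Path extraction: from a vertex where the walk cannot continue backwards,
the alternating f/g walk forms a simple path. -/
lemma PFwalk_path (hM : IsMatchingOn G f) (g : V → Option V) (hg : IsMatchingOn G g)
    (v0 : V) (r : ℕ) (hr : r < 2) (hv0 : g v0 ≠ f v0)
    (hstart : (if 1 % 2 = r then f else g) v0 = none) :
    ∃ (l : ℕ) (p : ℕ → V), 1 ≤ l ∧ p 0 = v0 ∧
      (∀ i j, i ≤ l → j ≤ l → p i = p j → i = j) ∧
      (∀ k, k < l → (if k % 2 = r then f else g) (p k) = some (p (k+1))) ∧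
      ((if l % 2 = r then f else g) (p l) = none) := by
  set mm : ℕ → V → Option V := fun k => if k % 2 = r then f else g with hmm
  have hsym : ∀ k u w, mm k w = some u → mm k u = some w := by
    intro k u w h
    rw [hmm] at h ⊢
    simp only [] at h ⊢
    split_ifs at h ⊢ with hk
    · exact hM.1 w u h
    · exact hg.1 w u h
  have hirr : ∀ k u, mm k u ≠ some u := by
    intro k u h
    rw [hmm] at h
    simp only [] at h
    split_ifs at h with hk
    · exact G.loopless.irrefl u (hM.2 u u h)
    · exact G.loopless.irrefl u (hg.2 u u h)
  have hpar : ∀ k k', k % 2 = k' % 2 → mm k = mm k' := by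
    intro k k' h
    rw [hmm]
    simp only []
    rw [h]
  have hinj := PFchain_inj mm v0 hsym hirr hpar hstart
  -- the chain terminates
  have hterm : ∃ k, PFchain mm v0 k = none := by
    by_contra hc
    push_neg at hc
    obtain ⟨j, hj, i, hij, he⟩ := PFchain_pigeon mm v0 hc
    cases hi : PFchain mm v0 i with
    | none => exact hc i hi
    | some a => exact hinj j i a hij hi (by rw [← he, hi])
  set k0 := Nat.find hterm with hk0
  have hk0spec : PFchain mm v0 k0 = none := Nat.find_spec hterm
  have hk0pos : 1 ≤ k0 := by
    rcases Nat.eq_zero_or_pos k0 with h | h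
    · rw [h] at hk0spec; exact absurd hk0spec (by rw [PFchain_zero]; simp)
    · exact h
  set l := k0 - 1 with hl
  have hlsome : ∀ k, k ≤ l → PFchain mm v0 k ≠ none := by
    intro k hk
    exact Nat.find_min hterm (by omega)
  have hlnone : PFchain mm v0 (l+1) = none := by
    have : l + 1 = k0 := by omega
    rw [this]; exact hk0spec
  have hpex : ∀ k, ∃ a, (k ≤ l → PFchain mm v0 k = some a) := by
    intro k
    by_cases hk : k ≤ l
    · cases h : PFchain mm v0 k with
      | none => exact absurd h (hlsome k hk)
      | some a => exact ⟨a, fun _ => rfl⟩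
    · exact ⟨v0, fun h => absurd h hk⟩
  choose p hpk using hpex
  have hp0 : p 0 = v0 := by
    have := hpk 0 (by omega)
    rw [PFchain_zero] at this
    exact (Option.some.inj this).symm
  have hedge : ∀ k, k < l → mm k (p k) = some (p (k+1)) := by
    intro k hk
    have h1 := hpk k (by omega)
    have h2 := hpk (k+1) (by omega)
    rw [PFchain_succ, h1] at h2
    exact h2
  have hend : mm l (p l) = none := by
    have := hlnone
    rw [PFchain_succ, hpk l (le_refl l)] at this
    exact this
  have hl1 : 1 ≤ l := by
    rcases Nat.eq_zero_or_pos l with h | h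
    · exfalso
      rw [h, hp0] at hend
      have h0 : mm 0 v0 = none := hend
      have h1 : (if 1 % 2 = r then f else g) v0 = none := hstart
      rw [hmm] at h0
      simp only [] at h0
      apply hv0
      split_ifs at h0 h1 with e1 e2 e3
      · omega
      · simp [h0, h1]
      · simp [h0, h1]
      · omega
    · exact h
  refine ⟨l, p, hl1, hp0, ?_, hedge, hend⟩
  intro i j hi hj he
  by_contra hne2
  rcases Nat.lt_or_ge i j with h | h
  · exact hinj j i (p i) h (hpk i hi) (by rw [hpk j hj, he])
  · exact hinj i j (p j) (by omega) (hpk j hj) (by rw [hpk i hi, he])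

/-- Cycle extraction: if every g≠f vertex is matched in both, the alternating walk
from v0 closes into a simple alternating cycle. -/
lemma PFwalk_cycle (hM : IsMatchingOn G f) (g : V → Option V) (hg : IsMatchingOn G g)
    (v0 : V) (hv0 : g v0 ≠ f v0)
    (hAct : ∀ v, g v ≠ f v → f v ≠ none ∧ g v ≠ none) :
    ∃ (n : ℕ) (p : ℕ → V), 4 ≤ n ∧ n % 2 = 0 ∧ p 0 = v0 ∧
      (∀ i j, i < n → j < n → p i = p j → i = j) ∧
      (∀ k, (if k % 2 = 1 then f else g) (p k) = some (p (k+1))) ∧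
      (∀ k, p (k + n) = p k) := by
  set mm : ℕ → V → Option V := fun k => if k % 2 = 1 then f else g with hmm
  have hsym : ∀ k u w, mm k w = some u → mm k u = some w := by
    intro k u w h
    rw [hmm] at h ⊢
    simp only [] at h ⊢
    split_ifs at h ⊢ with hk
    · exact hM.1 w u h
    · exact hg.1 w u h
  have hirr : ∀ k u, mm k u ≠ some u := by
    intro k u h
    rw [hmm] at h
    simp only [] at h
    split_ifs at h with hk
    · exact G.loopless.irrefl u (hM.2 u u h)
    · exact G.loopless.irrefl u (hg.2 u u h)
  have hpar : ∀ k k', k % 2 = k' % 2 → mm k = mm k' := by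
    intro k k' h
    rw [hmm]
    simp only []
    rw [h]
  have hne : ∀ w, ¬ (mm 0 v0 = some w ∧ mm 1 v0 = some w) := by
    intro w ⟨h0, h1⟩
    rw [hmm] at h0 h1
    simp only [] at h0 h1
    norm_num at h0 h1
    apply hv0
    rw [h0, h1]
  have hall : ∀ k, PFchain mm v0 k ≠ none := by
    intro k
    induction k with
    | zero => rw [PFchain_zero]; simp
    | succ k ih =>
      cases hk : PFchain mm v0 k with
      | none => exact absurd hk ih
      | some u =>
        rw [PFchain_succ, hk]
        show mm k u ≠ none
        intro hcon
        -- u has a defined partner on one side and none on the other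
        have hne2 : g u ≠ f u := by
          rcases Nat.eq_zero_or_pos k with h0 | hpos
          · subst h0
            rw [PFchain_zero] at hk
            have hvu : v0 = u := Option.some.inj hk
            rw [← hvu]
            exact hv0
          · obtain ⟨k', rfl⟩ : ∃ k', k = k' + 1 := ⟨k - 1, by omega⟩
            obtain ⟨z, hz, hmz⟩ := (PFchain_succ_some mm v0).1 hk
            have hinz : mm k' u = some z := hsym k' u z hmz
            intro hgf
            have hparne : mm (k'+1) u = mm k' u := by
              rw [hmm]
              simp only []
              rcases Nat.mod_two_eq_zero_or_one k' with h | h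
              · rw [if_pos (show (k'+1) % 2 = 1 by omega), if_neg (show ¬(k' % 2 = 1) by omega)]
                exact hgf.symm
              · rw [if_neg (show ¬((k'+1) % 2 = 1) by omega), if_pos h]
                exact hgf
            rw [hparne, hinz] at hcon
            exact nomatch hcon
        rcases Nat.mod_two_eq_zero_or_one k with h | h
        · -- mm k = g
          have : g u = none := by
            rw [hmm] at hcon; simp only [] at hcon; rwa [if_neg (by omega)] at hcon
          exact (hAct u hne2).2 this
        · have : f u = none := by
            rw [hmm] at hcon; simp only [] at hcon; rwa [if_pos (by omega)] at hcon
          exact (hAct u hne2).1 this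
  -- pigeonhole: minimal revisit
  have hpig := PFchain_pigeon mm v0 hall
  have hpig' : ∃ j, ∃ i, i < j ∧ PFchain mm v0 i = PFchain mm v0 j := by
    obtain ⟨j, _, i, hij, he⟩ := hpig; exact ⟨j, i, hij, he⟩
  set n := Nat.find hpig' with hn
  obtain ⟨i, hij, he⟩ := Nat.find_spec hpig'
  have hmin : ∀ i' j', i' < j' → j' < n → ∀ u', PFchain mm v0 i' = some u' →
      PFchain mm v0 j' = some u' → False := by
    intro i' j' h1 h2 u' a b
    exact Nat.find_min hpig' h2 ⟨i', h1, by rw [a, b]⟩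
  obtain ⟨u, hu⟩ : ∃ u, PFchain mm v0 i = some u := by
    cases h : PFchain mm v0 i with
    | none => exact absurd h (hall i)
    | some a => exact ⟨a, rfl⟩
  obtain ⟨hi0, hnpar, hn4, -⟩ := PFchain_revisit mm v0 hsym hirr hpar hne n hmin i u hij hu
    (by rw [← he]; exact hu)
  subst hi0
  have huv : u = v0 := by rw [PFchain_zero] at hu; exact (Option.some.inj hu).symm
  -- chain is periodic with period n
  have hper : ∀ k, PFchain mm v0 (k + n) = PFchain mm v0 k := by
    intro k
    induction k with
    | zero => rw [Nat.zero_add, ← he, PFchain_zero]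
    | succ k ih =>
      have e : k + 1 + n = (k + n) + 1 := by omega
      rw [e, PFchain_succ, PFchain_succ, ih, hpar (k+n) k (by omega)]
  have hpex : ∀ k, ∃ a, PFchain mm v0 k = some a := by
    intro k
    cases h : PFchain mm v0 k with
    | none => exact absurd h (hall k)
    | some a => exact ⟨a, rfl⟩
  choose p hpk using hpex
  have hp0 : p 0 = v0 := by
    have := hpk 0; rw [PFchain_zero] at this; exact (Option.some.inj this).symm
  refine ⟨n, p, hn4, hnpar, hp0, ?_, ?_, ?_⟩
  · intro a b ha hb he2
    by_contra hne2
    rcases Nat.lt_or_ge a b with h | h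
    · exact hmin a b h hb (p a) (hpk a) (by rw [hpk b, he2])
    · exact hmin b a (by omega) ha (p b) (hpk b) (by rw [hpk a, he2])
  · intro k
    have h1 := hpk k
    have h2 := hpk (k+1)
    rw [PFchain_succ, h1] at h2
    exact h2
  · intro k
    have h1 := hpk (k + n)
    rw [hper k, hpk k] at h1
    exact (Option.some.inj h1).symm

/-- Surgery: replacing g by f on a closed set C. -/
lemma PFsurgery (hM : IsMatchingOn G f) (g : V → Option V) (hg : IsMatchingOn G g)
    (C : Finset V)
    (hcl : ∀ w ∈ C, (∀ z, f w = some z → z ∈ C) ∧ (∀ z, g w = some z → z ∈ C)) :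
    IsMatchingOn G (fun v => if v ∈ C then f v else g v) ∧
    (Finset.univ.filter (fun v => (if v ∈ C then f v else g v) ≠ f v))
      = (Finset.univ.filter (fun v => g v ≠ f v)) \ C ∧
    (∑ v : V, vote rank v (g v) (f v))
      = (∑ v ∈ C, vote rank v (g v) (f v))
        + (∑ v : V, vote rank v ((if v ∈ C then f v else g v)) (f v)) := by
  refine ⟨⟨?_, ?_⟩, ?_, ?_⟩
  · intro v w h
    have h' : (if v ∈ C then f v else g v) = some w := h
    show (if w ∈ C then f w else g w) = some v
    by_cases hv : v ∈ C
    · rw [if_pos hv] at h'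
      have hw : w ∈ C := (hcl v hv).1 w h'
      rw [if_pos hw]
      exact hM.1 v w h'
    · rw [if_neg hv] at h'
      have hw : w ∉ C := fun hwC => hv ((hcl w hwC).2 v (hg.1 v w h'))
      rw [if_neg hw]
      exact hg.1 v w h'
  · intro v w h
    have h' : (if v ∈ C then f v else g v) = some w := h
    by_cases hv : v ∈ C
    · rw [if_pos hv] at h'; exact hM.2 v w h'
    · rw [if_neg hv] at h'; exact hg.2 v w h' 
  · ext v
    simp only [Finset.mem_filter, Finset.mem_sdiff, Finset.mem_univ, true_and]
    by_cases hv : v ∈ C <;> simp [hv]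
  · have e1 := Finset.sum_sdiff (f := fun v => vote rank v (g v) (f v)) (Finset.subset_univ C)
    have e2 := Finset.sum_sdiff
      (f := fun v => vote rank v ((if v ∈ C then f v else g v)) (f v)) (Finset.subset_univ C)
    have e3 : (∑ v ∈ C, vote rank v ((if v ∈ C then f v else g v)) (f v)) = 0 := by
      apply Finset.sum_eq_zero
      intro v hv
      rw [if_pos hv]
      exact PFvote_self rank v (f v)
    have e4 : (∑ v ∈ Finset.univ \ C, vote rank v ((if v ∈ C then f v else g v)) (f v))
        = ∑ v ∈ Finset.univ \ C, vote rank v (g v) (f v) := by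
      apply Finset.sum_congr rfl
      intro v hv
      rw [if_neg (Finset.mem_sdiff.1 hv).2]
    rw [← e1, ← e2, e3, e4]
    ring

/-- Case (a): component of v0 with f v0 = none. -/
lemma PFdelta_path_a (hstrict : StrictPrefs G rank) (hM : IsMatchingOn G f)
    (noII : ¬ StructII G rank f) (noIII : ¬ StructIII G rank f)
    (g : V → Option V) (hg : IsMatchingOn G g) (v0 : V)
    (hv0 : g v0 ≠ f v0) (hf0 : f v0 = none) :
    ∃ C : Finset V, v0 ∈ C ∧
      (∀ w ∈ C, (∀ z, f w = some z → z ∈ C) ∧ (∀ z, g w = some z → z ∈ C)) ∧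
      (∑ v ∈ C, vote rank v (g v) (f v)) ≤ 0 := by
  obtain ⟨l, p, hl1, hp0, hpinj, hedge, hend⟩ :=
    PFwalk_path G f hM g hg v0 1 (by omega) hv0
      (by rw [if_pos (by norm_num)]; exact hf0)
  -- edge values
  have hg_even : ∀ k, k < l → k % 2 = 0 → g (p k) = some (p (k+1)) := by
    intro k hk h2
    have := hedge k hk
    rwa [if_neg (by omega)] at this
  have hf_odd : ∀ k, k < l → k % 2 = 1 → f (p k) = some (p (k+1)) := by
    intro k hk h2
    have := hedge k hk
    rwa [if_pos h2] at this
  have hg_odd : ∀ k, k ≤ l → k % 2 = 1 → g (p k) = some (p (k-1)) := by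
    intro k hk h2
    have h1 := hg_even (k-1) (by omega) (by omega)
    have e : k - 1 + 1 = k := by omega
    rw [e] at h1
    exact hg.1 _ _ h1
  have hf_evenpos : ∀ k, k ≤ l → k % 2 = 0 → 0 < k → f (p k) = some (p (k-1)) := by
    intro k hk h2 hpos
    have h1 := hf_odd (k-1) (by omega) (by omega)
    have e : k - 1 + 1 = k := by omega
    rw [e] at h1
    exact hM.1 _ _ h1
  have hf_zero : f (p 0) = none := by rw [hp0]; exact hf0
  have hend_even : l % 2 = 0 → g (p l) = none := by
    intro h2; have := hend; rwa [if_neg (by omega)] at this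
  have hend_odd : l % 2 = 1 → f (p l) = none := by
    intro h2; have := hend; rwa [if_pos h2] at this
  -- hypotheses for CUT
  have halt : ∀ i, 0 ≤ i → i < l → (f (p i) = some (p (i+1)) ↔ i % 2 = 1) := by
    intro i _ hi
    constructor
    · intro hf
      by_contra h2
      have h2' : i % 2 = 0 := by omega
      rcases Nat.eq_zero_or_pos i with h0 | hpos
      · rw [h0, hf_zero] at hf
        exact nomatch hf
      · have h3 := hf_evenpos i (by omega) h2' hpos
        rw [h3] at hf
        have h4 := Option.some.inj hf
        have := hpinj (i-1) (i+1) (by omega) (by omega) h4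
        omega
    · exact hf_odd i hi
  have hadjw : ∀ i, 0 ≤ i → i < l → G.Adj (p i) (p (i+1)) := by
    intro i _ hi
    rcases Nat.mod_two_eq_zero_or_one i with h2 | h2
    · exact hg.2 _ _ (hg_even i hi h2)
    · exact hM.2 _ _ (hf_odd i hi h2)
  have hW := (PFcut G rank f hstrict hM noII noIII p 1 0 l (by omega)
    (fun i j h1 h2 h3 h4 h5 => hpinj i j h2 h4 h5) hadjw halt l 0 (by omega) (by omega)
    (by omega)).2 hf_zero
  -- the component
  refine ⟨(Finset.range (l+1)).image p, ?_, ?_, ?_⟩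
  · exact Finset.mem_image.2 ⟨0, Finset.mem_range.2 (by omega), hp0⟩
  · intro w hw
    obtain ⟨k, hkr, rfl⟩ := Finset.mem_image.1 hw
    have hkl : k ≤ l := by have := Finset.mem_range.1 hkr; omega
    constructor
    · intro z hz
      rcases Nat.mod_two_eq_zero_or_one k with h2 | h2
      · rcases Nat.eq_zero_or_pos k with h0 | hpos
        · rw [h0, hf_zero] at hz; exact nomatch hz
        · rw [hf_evenpos k hkl h2 hpos] at hz
          rw [← Option.some.inj hz]
          exact Finset.mem_image.2 ⟨k-1, Finset.mem_range.2 (by omega), rfl⟩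
      · rcases Nat.lt_or_ge k l with hkl2 | hkl2
        · rw [hf_odd k hkl2 h2] at hz
          rw [← Option.some.inj hz]
          exact Finset.mem_image.2 ⟨k+1, Finset.mem_range.2 (by omega), rfl⟩
        · have hkeq : k = l := by omega
          rw [hkeq, hend_odd (by omega)] at hz
          exact nomatch hz
    · intro z hz
      rcases Nat.mod_two_eq_zero_or_one k with h2 | h2
      · rcases Nat.lt_or_ge k l with hkl2 | hkl2
        · rw [hg_even k hkl2 h2] at hz
          rw [← Option.some.inj hz]
          exact Finset.mem_image.2 ⟨k+1, Finset.mem_range.2 (by omega), rfl⟩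
        · have hkeq : k = l := by omega
          rw [hkeq, hend_even (by omega)] at hz
          exact nomatch hz
      · rw [hg_odd k hkl h2] at hz
        rw [← Option.some.inj hz]
        exact Finset.mem_image.2 ⟨k-1, Finset.mem_range.2 (by omega), rfl⟩
  · -- the vote sum over the component
    have hsum_img : (∑ v ∈ (Finset.range (l+1)).image p, vote rank v (g v) (f v))
        = ∑ k ∈ Finset.range (l+1), vote rank (p k) (g (p k)) (f (p k)) := by
      apply Finset.sum_image
      intro i hi j hj he
      exact hpinj i j (by have := Finset.mem_range.1 hi; omega)
        (by have := Finset.mem_range.1 hj; omega) he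
    rw [hsum_img]
    have hodd0 : ∀ i, i < l → i % 2 = 1 → wE rank f (p i) (p (i+1)) = 0 :=
      fun i hi h2 => PFwE_f_edge G rank f hM (hf_odd i hi h2)
    have hpair : ∀ m2, 2*m2 ≤ l + 1 → ∀ j, j < m2 →
        vote rank (p (2*j)) (g (p (2*j))) (f (p (2*j)))
          + vote rank (p (2*j+1)) (g (p (2*j+1))) (f (p (2*j+1)))
        = wE rank f (p (2*j)) (p (2*j+1)) := by
      intro m2 hm2 j hj
      have hg1 := hg_even (2*j) (by omega) (by omega)
      have hg2 := hg_odd (2*j+1) (by omega) (by omega)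
      have e : 2*j+1-1 = 2*j := by omega
      rw [e] at hg2
      rw [hg1, hg2]
      rfl
    rcases Nat.mod_two_eq_zero_or_one l with hl2 | hl2
    · -- l even : extra -1 vertex at the end
      set m := l / 2 with hm
      have hlm : l = 2 * m := by omega
      have hAl : vote rank (p l) (g (p l)) (f (p l)) = -1 := by
        rw [hend_even hl2, hf_evenpos l (le_refl l) hl2 (by omega)]
        exact PFvote_none rank _ _
      rw [Finset.sum_range_succ, hAl]
      have h1 : (∑ k ∈ Finset.range l, vote rank (p k) (g (p k)) (f (p k)))
          = ∑ j ∈ Finset.range m, wE rank f (p (2*j)) (p (2*j+1)) := by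
        rw [hlm]
        exact PFsum_pair _ _ m (fun j hj => hpair m (by omega) j hj)
      have h2 : (∑ j ∈ Finset.range m, wE rank f (p (2*j)) (p (2*j+1)))
          = ∑ i ∈ Finset.Ico 0 l, wE rank f (p i) (p (i+1)) := by
        rw [← PFsum_even (fun i => wE rank f (p i) (p (i+1))) m, ← Finset.range_eq_Ico, hlm]
        apply Finset.sum_congr rfl
        intro i hi
        have hil : i < l := by rw [hlm]; exact Finset.mem_range.1 hi
        rcases Nat.mod_two_eq_zero_or_one i with h3 | h3
        · rw [if_pos h3]
        · rw [if_neg (by omega), hodd0 i hil h3]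
      rw [h1, h2]
      linarith
    · -- l odd
      set m := (l+1) / 2 with hm
      have hlm : l + 1 = 2 * m := by omega
      have h1 : (∑ k ∈ Finset.range (l+1), vote rank (p k) (g (p k)) (f (p k)))
          = ∑ j ∈ Finset.range m, wE rank f (p (2*j)) (p (2*j+1)) := by
        rw [hlm]
        exact PFsum_pair _ _ m (fun j hj => hpair m (by omega) j hj)
      have h2 : (∑ j ∈ Finset.range m, wE rank f (p (2*j)) (p (2*j+1)))
          = ∑ i ∈ Finset.Ico 0 l, wE rank f (p i) (p (i+1)) := by
        rw [← PFsum_even (fun i => wE rank f (p i) (p (i+1))) m, ← Finset.range_eq_Ico, ← hlm,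
          Finset.sum_range_succ, if_neg (by omega), add_zero]
        apply Finset.sum_congr rfl
        intro i hi
        have hil : i < l := Finset.mem_range.1 hi
        rcases Nat.mod_two_eq_zero_or_one i with h3 | h3
        · rw [if_pos h3]
        · rw [if_neg (by omega), hodd0 i hil h3]
      rw [h1, h2]
      exact hW

/-- Case (b): component of v0 with g v0 = none, when no active vertex is f-unmatched. -/
lemma PFdelta_path_b (hstrict : StrictPrefs G rank) (hM : IsMatchingOn G f)
    (noII : ¬ StructII G rank f) (noIII : ¬ StructIII G rank f)
    (g : V → Option V) (hg : IsMatchingOn G g) (v0 : V)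
    (hv0 : g v0 ≠ f v0) (hg0 : g v0 = none)
    (hnoA : ∀ v, g v ≠ f v → f v ≠ none) :
    ∃ C : Finset V, v0 ∈ C ∧
      (∀ w ∈ C, (∀ z, f w = some z → z ∈ C) ∧ (∀ z, g w = some z → z ∈ C)) ∧
      (∑ v ∈ C, vote rank v (g v) (f v)) ≤ 0 := by
  obtain ⟨l, p, hl1, hp0, hpinj, hedge, hend⟩ :=
    PFwalk_path G f hM g hg v0 0 (by omega) hv0
      (by rw [if_neg (by norm_num)]; exact hg0)
  have hf_even : ∀ k, k < l → k % 2 = 0 → f (p k) = some (p (k+1)) := by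
    intro k hk h2
    have := hedge k hk
    rwa [if_pos h2] at this
  have hg_oddE : ∀ k, k < l → k % 2 = 1 → g (p k) = some (p (k+1)) := by
    intro k hk h2
    have := hedge k hk
    rwa [if_neg (by omega)] at this
  have hf_oddv : ∀ k, k ≤ l → k % 2 = 1 → f (p k) = some (p (k-1)) := by
    intro k hk h2
    have h1 := hf_even (k-1) (by omega) (by omega)
    have e : k - 1 + 1 = k := by omega
    rw [e] at h1
    exact hM.1 _ _ h1
  have hg_evenv : ∀ k, k ≤ l → k % 2 = 0 → 0 < k → g (p k) = some (p (k-1)) := by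
    intro k hk h2 hpos
    have h1 := hg_oddE (k-1) (by omega) (by omega)
    have e : k - 1 + 1 = k := by omega
    rw [e] at h1
    exact hg.1 _ _ h1
  have hg_zero : g (p 0) = none := by rw [hp0]; exact hg0
  have hend_even : l % 2 = 0 → f (p l) = none := by
    intro h2; have := hend; rwa [if_pos h2] at this
  have hend_odd : l % 2 = 1 → g (p l) = none := by
    intro h2; have := hend; rwa [if_neg (by omega)] at this
  -- l must be odd, else p l is an active f-unmatched vertex
  have hlodd : l % 2 = 1 := by
    by_contra h2
    have h2' : l % 2 = 0 := by omega
    have hfl := hend_even h2'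
    have hgl := hg_evenv l (le_refl l) h2' (by omega)
    apply hnoA (p l) _ hfl
    rw [hfl, hgl]
    simp
  have halt : ∀ i, 0 ≤ i → i < l → (f (p i) = some (p (i+1)) ↔ i % 2 = 0) := by
    intro i _ hi
    constructor
    · intro hf
      by_contra h2
      have h3 := hf_oddv i (by omega) (by omega)
      rw [h3] at hf
      have h4 := Option.some.inj hf
      have := hpinj (i-1) (i+1) (by omega) (by omega) h4
      omega
    · exact hf_even i hi
  have hadjw : ∀ i, 0 ≤ i → i < l → G.Adj (p i) (p (i+1)) := by
    intro i _ hi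
    rcases Nat.mod_two_eq_zero_or_one i with h2 | h2
    · exact hM.2 _ _ (hf_even i hi h2)
    · exact hg.2 _ _ (hg_oddE i hi h2)
  have hW := (PFcut G rank f hstrict hM noII noIII p 0 0 l (by omega)
    (fun i j h1 h2 h3 h4 h5 => hpinj i j h2 h4 h5) hadjw halt l 0 (by omega) (by omega)
    (by omega)).1
  refine ⟨(Finset.range (l+1)).image p, ?_, ?_, ?_⟩
  · exact Finset.mem_image.2 ⟨0, Finset.mem_range.2 (by omega), hp0⟩
  · intro w hw
    obtain ⟨k, hkr, rfl⟩ := Finset.mem_image.1 hw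
    have hkl : k ≤ l := by have := Finset.mem_range.1 hkr; omega
    constructor
    · intro z hz
      rcases Nat.mod_two_eq_zero_or_one k with h2 | h2
      · rcases Nat.lt_or_ge k l with hkl2 | hkl2
        · rw [hf_even k hkl2 h2] at hz
          rw [← Option.some.inj hz]
          exact Finset.mem_image.2 ⟨k+1, Finset.mem_range.2 (by omega), rfl⟩
        · have hkeq : k = l := by omega
          exfalso; omega
      · rw [hf_oddv k hkl h2] at hz
        rw [← Option.some.inj hz]
        exact Finset.mem_image.2 ⟨k-1, Finset.mem_range.2 (by omega), rfl⟩
    · intro z hz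
      rcases Nat.mod_two_eq_zero_or_one k with h2 | h2
      · rcases Nat.eq_zero_or_pos k with h0 | hpos
        · rw [h0, hg_zero] at hz; exact nomatch hz
        · rw [hg_evenv k hkl h2 hpos] at hz
          rw [← Option.some.inj hz]
          exact Finset.mem_image.2 ⟨k-1, Finset.mem_range.2 (by omega), rfl⟩
      · rcases Nat.lt_or_ge k l with hkl2 | hkl2
        · rw [hg_oddE k hkl2 h2] at hz
          rw [← Option.some.inj hz]
          exact Finset.mem_image.2 ⟨k+1, Finset.mem_range.2 (by omega), rfl⟩
        · have hkeq : k = l := by omega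
          rw [hkeq, hend_odd hlodd] at hz
          exact nomatch hz
  · have hsum_img : (∑ v ∈ (Finset.range (l+1)).image p, vote rank v (g v) (f v))
        = ∑ k ∈ Finset.range (l+1), vote rank (p k) (g (p k)) (f (p k)) := by
      apply Finset.sum_image
      intro i hi j hj he
      exact hpinj i j (by have := Finset.mem_range.1 hi; omega)
        (by have := Finset.mem_range.1 hj; omega) he
    rw [hsum_img]
    set m := l / 2 with hm
    have hlm : l = 2 * m + 1 := by omega
    have hA0 : vote rank (p 0) (g (p 0)) (f (p 0)) = -1 := by
      rw [hg_zero, hf_even 0 (by omega) (by omega)]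
      exact PFvote_none rank _ _
    have hAl : vote rank (p l) (g (p l)) (f (p l)) = -1 := by
      rw [hend_odd hlodd, hf_oddv l (le_refl l) hlodd]
      exact PFvote_none rank _ _
    -- middle sum equals sum of odd-edge weights
    have hmid : (∑ t ∈ Finset.range (2*m), vote rank (p (t+1)) (g (p (t+1))) (f (p (t+1))))
        = ∑ j ∈ Finset.range m, wE rank f (p (2*j+1)) (p (2*j+2)) := by
      apply PFsum_pair
      intro j hj
      have hg1 := hg_oddE (2*j+1) (by omega) (by omega)
      have hg2 := hg_evenv (2*j+2) (by omega) (by omega) (by omega)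
      have e : 2*j+2-1 = 2*j+1 := by omega
      rw [e] at hg2
      show vote rank (p (2*j+1)) (g (p (2*j+1))) (f (p (2*j+1)))
          + vote rank (p (2*j+1+1)) (g (p (2*j+1+1))) (f (p (2*j+1+1)))
        = wE rank f (p (2*j+1)) (p (2*j+2))
      have e2 : 2*j+1+1 = 2*j+2 := by omega
      rw [e2, hg1, hg2]
      have e3 : 2*j+1+1 = 2*j+2 := by omega
      rw [← e3]
      rfl
    have hWmid : (∑ i ∈ Finset.Ico 0 l, wE rank f (p i) (p (i+1)))
        = ∑ j ∈ Finset.range m, wE rank f (p (2*j+1)) (p (2*j+2)) := by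
      rw [← Finset.range_eq_Ico, hlm, Finset.sum_range_succ']
      rw [PFwE_f_edge G rank f hM (hf_even 0 (by omega) (by omega)), add_zero]
      apply PFsum_pair
      intro j hj
      have he0 : wE rank f (p (2*j+1+1)) (p (2*j+1+1+1)) = 0 := by
        apply PFwE_f_edge G rank f hM
        exact hf_even (2*j+2) (by omega) (by omega)
      rw [he0, add_zero]
    have hsplit : (∑ k ∈ Finset.range (l+1), vote rank (p k) (g (p k)) (f (p k)))
        = vote rank (p 0) (g (p 0)) (f (p 0))
          + (∑ t ∈ Finset.range (2*m), vote rank (p (t+1)) (g (p (t+1))) (f (p (t+1))))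
          + vote rank (p l) (g (p l)) (f (p l)) := by
      rw [Finset.sum_range_succ]
      congr 1
      have e : l = 2*m + 1 := hlm
      rw [e, Finset.sum_range_succ']
      ring
    rw [hsplit, hA0, hAl, hmid]
    rw [hWmid] at hW
    linarith

/-- Cycle case: every active vertex is matched in both f and g. -/
lemma PFdelta_cycle (hstrict : StrictPrefs G rank) (hM : IsMatchingOn G f)
    (noI : ¬ StructI G rank f) (noII : ¬ StructII G rank f) (noIII : ¬ StructIII G rank f)
    (g : V → Option V) (hg : IsMatchingOn G g) (v0 : V)
    (hv0 : g v0 ≠ f v0) (hAct : ∀ v, g v ≠ f v → f v ≠ none ∧ g v ≠ none) :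
    ∃ C : Finset V, v0 ∈ C ∧
      (∀ w ∈ C, (∀ z, f w = some z → z ∈ C) ∧ (∀ z, g w = some z → z ∈ C)) ∧
      (∑ v ∈ C, vote rank v (g v) (f v)) ≤ 0 := by
  obtain ⟨n, p, hn4, hnpar, hp0, hpinj, hedge, hper⟩ := PFwalk_cycle G f hM g hg v0 hv0 hAct
  have hg_even : ∀ k, k % 2 = 0 → g (p k) = some (p (k+1)) := by
    intro k h2
    have := hedge k
    rwa [if_neg (by omega)] at this
  have hf_odd : ∀ k, k % 2 = 1 → f (p k) = some (p (k+1)) := by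
    intro k h2
    have := hedge k
    rwa [if_pos h2] at this
  have hg_oddv : ∀ k, k % 2 = 1 → g (p k) = some (p (k-1)) := by
    intro k h2
    have h1 := hg_even (k-1) (by omega)
    have e : k - 1 + 1 = k := by omega
    rw [e] at h1
    exact hg.1 _ _ h1
  have hf_evenv : ∀ k, k % 2 = 0 → 0 < k → f (p k) = some (p (k-1)) := by
    intro k h2 hpos
    have h1 := hf_odd (k-1) (by omega)
    have e : k - 1 + 1 = k := by omega
    rw [e] at h1
    exact hM.1 _ _ h1
  have hpn : p n = p 0 := by have := hper 0; simpa using this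
  have hf_zero : f (p 0) = some (p (n-1)) := by
    have h1 := hf_odd (n-1) (by omega)
    have e : n - 1 + 1 = n := by omega
    rw [e, hpn] at h1
    exact hM.1 _ _ h1
  have hpmod : ∀ t, p t = p (t % n) := by
    intro t
    induction t using Nat.strong_induction_on with
    | _ t IH =>
      rcases Nat.lt_or_ge t n with h | h
      · rw [Nat.mod_eq_of_lt h]
      · have e : t = (t - n) + n := by omega
        rw [e, hper (t-n), IH (t-n) (by omega), Nat.add_mod_right]
  have hinj_mod : ∀ a b, p a = p b → a % n = b % n := by
    intro a b he
    have h1 : p (a % n) = p (b % n) := by rw [← hpmod, ← hpmod]; exact he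
    exact hpinj _ _ (Nat.mod_lt _ (by omega)) (Nat.mod_lt _ (by omega)) h1
  have hparity_mod : ∀ t, (t % n) % 2 = t % 2 := by
    intro t
    have hev : (n * (t / n)) % 2 = 0 := Nat.even_iff.1 ((Nat.even_iff.2 hnpar).mul_right _)
    have hq := Nat.div_add_mod t n
    omega
  have halt_all : ∀ t, (f (p t) = some (p (t+1)) ↔ t % 2 = 1) := by
    intro t
    constructor
    · intro hf
      by_contra h2
      have h2' : t % 2 = 0 := by omega
      set s := t % n with hs
      have hsn : s < n := Nat.mod_lt _ (by omega)
      have hsev : s % 2 = 0 := by rw [hs, hparity_mod]; exact h2'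
      have e : (t + 1) % n = s + 1 := by
        have h1n : (1:ℕ) % n = 1 := Nat.mod_eq_of_lt (by omega)
        rw [Nat.add_mod, h1n, ← hs, Nat.mod_eq_of_lt (by omega)]
      have hf2 : f (p s) = some (p (s + 1)) := by
        rw [← e]
        have e2 := hpmod t
        have e3 := hpmod (t+1)
        rw [← hs] at e2
        rw [← e2, ← e3]
        exact hf
      rcases Nat.eq_zero_or_pos s with h0 | hpos
      · rw [h0, hf_zero] at hf2
        have h4 := Option.some.inj hf2
        have h5 := hpinj (n-1) (0+1) (by omega) (by omega) h4
        omega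
      · rw [hf_evenv s hsev hpos] at hf2
        have h4 := Option.some.inj hf2
        have h5 := hpinj (s-1) (s+1) (by omega) (by omega) h4
        omega
    · exact hf_odd t
  have hadj_all : ∀ t, G.Adj (p t) (p (t+1)) := by
    intro t
    rcases Nat.mod_two_eq_zero_or_one t with h2 | h2
    · exact hg.2 _ _ (hg_even t h2)
    · exact hM.2 _ _ (hf_odd t h2)
  refine ⟨(Finset.range n).image p, ?_, ?_, ?_⟩
  · exact Finset.mem_image.2 ⟨0, Finset.mem_range.2 (by omega), hp0⟩
  · intro w hw
    obtain ⟨k, hkr, rfl⟩ := Finset.mem_image.1 hw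
    have hkn : k < n := Finset.mem_range.1 hkr
    constructor
    · intro z hz
      rcases Nat.mod_two_eq_zero_or_one k with h2 | h2
      · rcases Nat.eq_zero_or_pos k with h0 | hpos
        · rw [h0, hf_zero] at hz
          rw [← Option.some.inj hz]
          exact Finset.mem_image.2 ⟨n-1, Finset.mem_range.2 (by omega), rfl⟩
        · rw [hf_evenv k h2 hpos] at hz
          rw [← Option.some.inj hz]
          exact Finset.mem_image.2 ⟨k-1, Finset.mem_range.2 (by omega), rfl⟩
      · rw [hf_odd k h2] at hz
        rcases (show k + 1 < n ∨ k + 1 = n by omega) with h3 | h3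
        · rw [← Option.some.inj hz]
          exact Finset.mem_image.2 ⟨k+1, Finset.mem_range.2 h3, rfl⟩
        · rw [← Option.some.inj hz, h3, hpn]
          exact Finset.mem_image.2 ⟨0, Finset.mem_range.2 (by omega), rfl⟩
    · intro z hz
      rcases Nat.mod_two_eq_zero_or_one k with h2 | h2
      · rw [hg_even k h2] at hz
        rw [← Option.some.inj hz]
        exact Finset.mem_image.2 ⟨k+1, Finset.mem_range.2 (by omega), rfl⟩
      · rw [hg_oddv k h2] at hz
        rw [← Option.some.inj hz]
        exact Finset.mem_image.2 ⟨k-1, Finset.mem_range.2 (by omega), rfl⟩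
  · have hsum_img : (∑ v ∈ (Finset.range n).image p, vote rank v (g v) (f v))
        = ∑ k ∈ Finset.range n, vote rank (p k) (g (p k)) (f (p k)) := by
      apply Finset.sum_image
      intro i hi j hj he
      exact hpinj i j (Finset.mem_range.1 hi) (Finset.mem_range.1 hj) he
    rw [hsum_img]
    set m := n / 2 with hm
    have hnm : n = 2 * m := by omega
    have hdelta : (∑ k ∈ Finset.range n, vote rank (p k) (g (p k)) (f (p k)))
        = ∑ j ∈ Finset.range m, wE rank f (p (2*j)) (p (2*j+1)) := by
      rw [hnm]
      apply PFsum_pair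
      intro j hj
      have hg1 := hg_even (2*j) (by omega)
      have hg2 := hg_oddv (2*j+1) (by omega)
      have e : 2*j+1-1 = 2*j := by omega
      rw [e] at hg2
      rw [hg1, hg2]
      rfl
    rw [hdelta]
    have hodd0 : ∀ i, i % 2 = 1 → wE rank f (p i) (p (i+1)) = 0 :=
      fun i h2 => PFwE_f_edge G rank f hM (hf_odd i h2)
    have hTeq : (∑ j ∈ Finset.range m, wE rank f (p (2*j)) (p (2*j+1)))
        = ∑ k ∈ Finset.range n, wE rank f (p k) (p (k+1)) := by
      rw [← PFsum_even (fun i => wE rank f (p i) (p (i+1))) m, hnm]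
      apply Finset.sum_congr rfl
      intro i _
      rcases Nat.mod_two_eq_zero_or_one i with h3 | h3
      · rw [if_pos h3]
      · rw [if_neg (by omega), hodd0 i h3]
    by_cases hex2 : ∃ k, k < n ∧ wE rank f (p k) (p (k+1)) = -2
    · obtain ⟨j0, hj0n, hj0w⟩ := hex2
      have hj0e : j0 % 2 = 0 := by
        by_contra h2
        rw [hodd0 j0 (by omega)] at hj0w
        norm_num at hj0w
      set F := fun k => wE rank f (p k) (p (k+1)) with hF
      have hFper : ∀ t, F (t + n) = F t := by
        intro t
        show wE rank f (p (t+n)) (p (t+n+1)) = wE rank f (p t) (p (t+1))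
        have e : t + n + 1 = (t+1) + n := by omega
        rw [hper t, e, hper (t+1)]
      have hrot := PFsum_rot F n hFper j0
      -- CUT on the rotated window [1, n]
      have hinjq : ∀ i j, 1 ≤ i → i ≤ n → 1 ≤ j → j ≤ n →
          (fun t => p (t + j0)) i = (fun t => p (t + j0)) j → i = j := by
        intro i j hi1 hin hj1 hjn he
        have hmod : (i + j0) % n = (j + j0) % n := hinj_mod _ _ he
        have hmm : i % n = j % n := Nat.ModEq.add_right_cancel' j0 hmod
        rcases (show i < n ∨ i = n by omega) with hi2 | hi2 <;>
          rcases (show j < n ∨ j = n by omega) with hj2 | hj2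
        · rw [Nat.mod_eq_of_lt hi2, Nat.mod_eq_of_lt hj2] at hmm; exact hmm
        · rw [Nat.mod_eq_of_lt hi2, hj2, Nat.mod_self] at hmm; omega
        · rw [Nat.mod_eq_of_lt hj2, hi2, Nat.mod_self] at hmm; omega
        · omega
      have hadjq : ∀ i, 1 ≤ i → i < n → G.Adj ((fun t => p (t + j0)) i) ((fun t => p (t + j0)) (i+1)) := by
        intro i _ _
        show G.Adj (p (i + j0)) (p (i + 1 + j0))
        have e : i + 1 + j0 = i + j0 + 1 := by omega
        rw [e]
        exact hadj_all (i + j0)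
      have haltq : ∀ i, 1 ≤ i → i < n →
          (f ((fun t => p (t + j0)) i) = some ((fun t => p (t + j0)) (i+1)) ↔ i % 2 = 1) := by
        intro i _ _
        show f (p (i + j0)) = some (p (i + 1 + j0)) ↔ i % 2 = 1
        have e : i + 1 + j0 = i + j0 + 1 := by omega
        rw [e, halt_all (i + j0)]
        omega
      have hcutb := (PFcut G rank f hstrict hM noII noIII (fun t => p (t + j0)) 1 1 n
        (by omega) hinjq hadjq haltq n 1 (by omega) (by omega) (by omega)).1
      have hq_sum : (∑ i ∈ Finset.Ico 1 n, wE rank f ((fun t => p (t + j0)) i)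
            ((fun t => p (t + j0)) (i+1)))
          = ∑ i ∈ Finset.Ico 1 n, F (i + j0) := by
        apply Finset.sum_congr rfl
        intro i _
        show wE rank f (p (i + j0)) (p (i + 1 + j0)) = wE rank f (p (i + j0)) (p (i + j0 + 1))
        have e : i + 1 + j0 = i + j0 + 1 := by omega
        rw [e]
      have hsplit2 : (∑ k ∈ Finset.range n, F (k + j0))
          = F j0 + ∑ i ∈ Finset.Ico 1 n, F (i + j0) := by
        rw [Finset.range_eq_Ico, Finset.sum_eq_sum_Ico_succ_bot (by omega : 0 < n)]
        congr 1
        show F (0 + j0) = F j0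
        rw [Nat.zero_add]
      rw [hq_sum] at hcutb
      have hFj0 : F j0 = -2 := hj0w
      rw [hTeq, ← hrot, hsplit2, hFj0]
      linarith
    · by_cases hblk : ∃ k, k < n ∧ wE rank f (p k) (p (k+1)) = 2
      · exfalso
        apply noI
        obtain ⟨k, hk, hw2⟩ := hblk
        refine ⟨p, n, ⟨hn4, Nat.even_iff.2 hnpar, hpn, hpinj, ?_, ?_⟩, k, hk, ?_⟩
        · intro i hi
          exact ⟨hadj_all i, fun hcon => hex2 ⟨i, hi, hcon⟩⟩
        · intro i _
          rw [halt_all i]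
          exact (Nat.odd_iff).symm
        · exact (PFwE_eq_two_iff G rank f hstrict hM (hadj_all k)).1 hw2
      · have hzero : ∀ j ∈ Finset.range m, wE rank f (p (2*j)) (p (2*j+1)) = 0 := by
          intro j hj
          have hjm := Finset.mem_range.1 hj
          rcases PFwE_cases G rank f hstrict hM (hadj_all (2*j)) with h | h | h
          · exact absurd ⟨2*j, by omega, h⟩ hex2
          · exact h
          · exact absurd ⟨2*j, by omega, h⟩ hblk
        rw [Finset.sum_eq_zero hzero]

/-- Main bound: if no blocking structure exists, every matching has nonpositive total vote. -/
lemma PFmain_bound (hstrict : StrictPrefs G rank) (hM : IsMatchingOn G f)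
    (noI : ¬ StructI G rank f) (noII : ¬ StructII G rank f) (noIII : ¬ StructIII G rank f) :
    ∀ (N : ℕ) (g : V → Option V), IsMatchingOn G g →
      (Finset.univ.filter (fun v => g v ≠ f v)).card ≤ N →
      (∑ v : V, vote rank v (g v) (f v)) ≤ 0 := by
  intro N
  induction N with
  | zero =>
    intro g hg hcard
    have hall : ∀ v, g v = f v := by
      intro v
      by_contra hne
      have : v ∈ Finset.univ.filter (fun v => g v ≠ f v) := by
        simp [Finset.mem_filter, hne]
      have := Finset.card_pos.2 ⟨v, this⟩
      omega
    have : (∑ v : V, vote rank v (g v) (f v)) = 0 := by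
      apply Finset.sum_eq_zero
      intro v _
      rw [hall v]
      exact PFvote_self rank v (f v)
    omega
  | succ N ih =>
    intro g hg hcard
    by_cases hone : ∃ v0, g v0 ≠ f v0
    · -- find a component and do surgery
      have hcomp : ∃ (v0 : V) (C : Finset V), g v0 ≠ f v0 ∧ v0 ∈ C ∧
          (∀ w ∈ C, (∀ z, f w = some z → z ∈ C) ∧ (∀ z, g w = some z → z ∈ C)) ∧
          (∑ v ∈ C, vote rank v (g v) (f v)) ≤ 0 := by
        by_cases hA : ∃ v0, g v0 ≠ f v0 ∧ f v0 = none
        · obtain ⟨v0, hv0, hf0⟩ := hA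
          obtain ⟨C, h1, h2, h3⟩ :=
            PFdelta_path_a G rank f hstrict hM noII noIII g hg v0 hv0 hf0
          exact ⟨v0, C, hv0, h1, h2, h3⟩
        · push_neg at hA
          by_cases hB : ∃ v0, g v0 ≠ f v0 ∧ g v0 = none
          · obtain ⟨v0, hv0, hg0⟩ := hB
            obtain ⟨C, h1, h2, h3⟩ :=
              PFdelta_path_b G rank f hstrict hM noII noIII g hg v0 hv0 hg0 hA
            exact ⟨v0, C, hv0, h1, h2, h3⟩
          · push_neg at hB
            obtain ⟨v0, hv0⟩ := hone
            obtain ⟨C, h1, h2, h3⟩ :=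
              PFdelta_cycle G rank f hstrict hM noI noII noIII g hg v0 hv0
                (fun v hv => ⟨hA v hv, hB v hv⟩)
            exact ⟨v0, C, hv0, h1, h2, h3⟩
      obtain ⟨v0, C, hv0, hv0C, hcl, hdelta⟩ := hcomp
      obtain ⟨hg', hfilter, hsum⟩ := PFsurgery G rank f hM g hg C hcl
      have hcard' : (Finset.univ.filter
          (fun v => (if v ∈ C then f v else g v) ≠ f v)).card ≤ N := by
        rw [hfilter]
        have hv0mem : v0 ∈ Finset.univ.filter (fun v => g v ≠ f v) := by
          simp [Finset.mem_filter, hv0]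
        have hsub : (Finset.univ.filter (fun v => g v ≠ f v)) \ C ⊆
            (Finset.univ.filter (fun v => g v ≠ f v)).erase v0 := by
          intro x hx
          rw [Finset.mem_sdiff] at hx
          rw [Finset.mem_erase]
          exact ⟨fun he => hx.2 (he ▸ hv0C), hx.1⟩
        have h1 := Finset.card_le_card hsub
        rw [Finset.card_erase_of_mem hv0mem] at h1
        omega
      have hrec := ih (fun v => if v ∈ C then f v else g v) hg' hcard'
      rw [hsum]
      linarith
    · push_neg at hone
      have : (∑ v : V, vote rank v (g v) (f v)) = 0 := by
        apply Finset.sum_eq_zero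
        intro v _
        rw [hone v]
        exact PFvote_self rank v (f v)
      omega

lemma PFaltpath_parity (p : ℕ → V) (n : ℕ) (hAP : AltPath (GMgraph G rank f) f p n)
    (h0 : ¬ f (p 0) = some (p 1)) :
    ∀ i, i < n → (f (p i) = some (p (i+1)) ↔ i % 2 = 1) := by
  intro i
  induction i with
  | zero =>
    intro _
    constructor
    · intro h; exact absurd h h0
    · intro h; omega
  | succ i IH =>
    intro hi
    have hIH := IH (by omega)
    have halt := hAP.2.2 i (by omega)
    have hkey : (¬ f (p (i+1)) = some (p (i+2))) ↔ i % 2 = 1 := by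
      rw [← halt]; exact hIH
    rcases Nat.mod_two_eq_zero_or_one i with h | h
    · have hX : f (p (i+1)) = some (p (i+2)) :=
        not_not.1 (fun hnX => by have := hkey.1 hnX; omega)
      constructor
      · intro _; omega
      · intro _; exact hX
    · have hnX : ¬ f (p (i+1)) = some (p (i+2)) := hkey.2 h
      constructor
      · intro h3; exact absurd h3 hnX
      · intro h3; omega

/-- Flipping an alternating path that starts at an unmatched node or a blocking edge
and ends with a blocking edge produces a more popular matching. -/
lemma PFflip_path (hstrict : StrictPrefs G rank) (hM : IsMatchingOn G f)
    (p : ℕ → V) (n : ℕ) (hAP : AltPath (GMgraph G rank f) f p n)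
    (hstart : (BlockingEdge G rank f (p 0) (p 1) ∧ 3 ≤ n) ∨ (f (p 0) = none ∧ 1 ≤ n))
    (hend : BlockingEdge G rank f (p (n-1)) (p n)) :
    ¬ PopularM G rank f := by
  have h0 : ¬ f (p 0) = some (p 1) := by
    rcases hstart with ⟨hb, -⟩ | ⟨hf, -⟩
    · exact hb.2.1
    · rw [hf]; simp
  have hn1 : 1 ≤ n := by rcases hstart with ⟨-, h⟩ | ⟨-, h⟩ <;> omega
  have hpar := PFaltpath_parity G rank f p n hAP h0
  have hnodd : n % 2 = 1 := by
    have h1 := hend.2.1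
    have h2 := hpar (n-1) (by omega)
    have e : n - 1 + 1 = n := by omega
    rw [e] at h2
    have hne : ¬ ((n-1) % 2 = 1) := fun hh => h1 (h2.2 hh)
    omega
  have hinj := hAP.1
  have hadjGM := hAP.2.1
  have hf_oddE : ∀ i, i < n → i % 2 = 1 → f (p i) = some (p (i+1)) :=
    fun i hi h2 => (hpar i hi).2 h2
  have hf_evenv : ∀ i, i ≤ n → i % 2 = 0 → 0 < i → f (p i) = some (p (i-1)) := by
    intro i hi h2 hpos
    have h1 := hf_oddE (i-1) (by omega) (by omega)
    have e : i - 1 + 1 = i := by omega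
    rw [e] at h1
    exact hM.1 _ _ h1
  classical
  set g' : V → Option V := fun v =>
    if h : ∃ i, i ≤ n ∧ p i = v then
      (if h.choose % 2 = 0 then some (p (h.choose + 1)) else some (p (h.choose - 1)))
    else if f v = some (p 0) ∨ f v = some (p n) then none else f v with hg'def
  have hgeval : ∀ k, k ≤ n →
      g' (p k) = if k % 2 = 0 then some (p (k+1)) else some (p (k-1)) := by
    intro k hk
    rw [hg'def]
    simp only []
    rw [dif_pos (⟨k, hk, rfl⟩ : ∃ i, i ≤ n ∧ p i = p k)]
    have hch := (⟨k, hk, rfl⟩ : ∃ i, i ≤ n ∧ p i = p k).choose_spec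
    have heq : (⟨k, hk, rfl⟩ : ∃ i, i ≤ n ∧ p i = p k).choose = k :=
      hinj _ _ hch.1 hk hch.2
    rw [heq]
  have hgoff : ∀ v, (¬ ∃ i, i ≤ n ∧ p i = v) →
      g' v = if f v = some (p 0) ∨ f v = some (p n) then none else f v := by
    intro v hv
    rw [hg'def]
    simp only []
    rw [dif_neg hv]
  -- g' is a matching
  have hg'm : IsMatchingOn G g' := by
    constructor
    · intro v w h
      by_cases hv : ∃ i, i ≤ n ∧ p i = v
      · obtain ⟨k, hk, rfl⟩ := hv
        rw [hgeval k hk] at h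
        rcases Nat.mod_two_eq_zero_or_one k with h2 | h2
        · rw [if_pos h2] at h
          have hw : w = p (k+1) := (Option.some.inj h).symm
          have hk1 : k + 1 ≤ n := by omega
          rw [hw, hgeval (k+1) hk1, if_neg (by omega)]
          rfl
        · rw [if_neg (by omega)] at h
          have hw : w = p (k-1) := (Option.some.inj h).symm
          have hk1 : k - 1 ≤ n := by omega
          rw [hw, hgeval (k-1) hk1, if_pos (by omega)]
          have e : k - 1 + 1 = k := by omega
          rw [e]
      · rw [hgoff v hv] at h
        by_cases hc : f v = some (p 0) ∨ f v = some (p n)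
        · rw [if_pos hc] at h; exact nomatch h
        · rw [if_neg hc] at h
          push_neg at hc
          have hfwv : f w = some v := hM.1 v w h
          have hwoff : ¬ ∃ i, i ≤ n ∧ p i = w := by
            rintro ⟨i, hi, rfl⟩
            rcases (show i = 0 ∨ i = n ∨ (0 < i ∧ i < n) by omega) with h3 | h3 | h3
            · subst h3
              exact hc.1 (hM.1 _ _ hfwv)
            · subst h3
              exact hc.2 (hM.1 _ _ hfwv)
            · rcases Nat.mod_two_eq_zero_or_one i with h4 | h4
              · rw [hf_evenv i (by omega) h4 h3.1] at hfwv
                exact hv ⟨i-1, by omega, Option.some.inj hfwv⟩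
              · rw [hf_oddE i h3.2 h4] at hfwv
                exact hv ⟨i+1, by omega, Option.some.inj hfwv⟩
          rw [hgoff w hwoff, if_neg, hfwv]
          push_neg
          constructor
          · intro hcon
            have := Option.some.inj (hfwv.symm.trans hcon)
            exact hv ⟨0, by omega, this.symm⟩
          · intro hcon
            have := Option.some.inj (hfwv.symm.trans hcon)
            exact hv ⟨n, le_refl n, this.symm⟩
    · intro v w h
      by_cases hv : ∃ i, i ≤ n ∧ p i = v
      · obtain ⟨k, hk, rfl⟩ := hv
        rw [hgeval k hk] at h
        rcases Nat.mod_two_eq_zero_or_one k with h2 | h2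
        · rw [if_pos h2] at h
          rw [← Option.some.inj h]
          exact (hadjGM k (by omega)).1
        · rw [if_neg (by omega)] at h
          rw [← Option.some.inj h]
          have hadj := (hadjGM (k-1) (by omega)).1
          have e : k - 1 + 1 = k := by omega
          rw [e] at hadj
          exact hadj.symm
      · rw [hgoff v hv] at h
        by_cases hc : f v = some (p 0) ∨ f v = some (p n)
        · rw [if_pos hc] at h; exact nomatch h
        · rw [if_neg hc] at h; exact hM.2 v w h
  -- vote sums
  set T := (Finset.range (n+1)).image p with hT
  have hsum_img : (∑ v ∈ T, vote rank v (g' v) (f v))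
      = ∑ k ∈ Finset.range (n+1), vote rank (p k) (g' (p k)) (f (p k)) := by
    apply Finset.sum_image
    intro i hi j hj he
    exact hinj i j (by have := Finset.mem_range.1 hi; omega)
      (by have := Finset.mem_range.1 hj; omega) he
  set m := (n+1) / 2 with hm
  have hnm : n + 1 = 2 * m := by omega
  have hpath_sum : (∑ k ∈ Finset.range (n+1), vote rank (p k) (g' (p k)) (f (p k)))
      = ∑ j ∈ Finset.range m, wE rank f (p (2*j)) (p (2*j+1)) := by
    rw [hnm]
    apply PFsum_pair
    intro j hj
    have h1 := hgeval (2*j) (by omega)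
    have h2 := hgeval (2*j+1) (by omega)
    rw [if_pos (by omega)] at h1
    rw [if_neg (by omega)] at h2
    have e : 2*j+1-1 = 2*j := by omega
    rw [e] at h2
    rw [h1, h2]
    rfl
  have hnonneg : ∀ j ∈ Finset.range m, (0:ℤ) ≤ wE rank f (p (2*j)) (p (2*j+1)) := by
    intro j hj
    have hjm := Finset.mem_range.1 hj
    have hadj := hadjGM (2*j) (by omega)
    rcases PFwE_cases G rank f hstrict hM hadj.1 with h | h | h
    · exact absurd h hadj.2
    · omega
    · omega
  have hlast : wE rank f (p (2*(m-1))) (p (2*(m-1)+1)) = 2 := by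
    have e1 : 2*(m-1) = n - 1 := by omega
    rw [e1]
    have e3 : n - 1 + 1 = n := by omega
    rw [e3]
    exact (PFwE_eq_two_iff G rank f hstrict hM hend.1).2 hend
  -- off-path bound
  set T2 := (f (p 0)).toFinset ∪ (f (p n)).toFinset with hT2
  have hoff_bound : -(T2.card : ℤ) ≤ ∑ v ∈ Finset.univ \ T, vote rank v (g' v) (f v) := by
    have hptw : ∀ v ∈ Finset.univ \ T, (if v ∈ T2 then (-1:ℤ) else 0) ≤ vote rank v (g' v) (f v) := by
      intro v hv
      have hvoff : ¬ ∃ i, i ≤ n ∧ p i = v := by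
        rintro ⟨i, hi, rfl⟩
        exact (Finset.mem_sdiff.1 hv).2
          (Finset.mem_image.2 ⟨i, Finset.mem_range.2 (by omega), rfl⟩)
      rw [hgoff v hvoff]
      by_cases hc : f v = some (p 0) ∨ f v = some (p n)
      · rw [if_pos hc]
        have hvT2 : v ∈ T2 := by
          rw [hT2, Finset.mem_union]
          rcases hc with h | h
          · left; rw [Option.mem_toFinset]; exact Option.mem_def.mpr (hM.1 _ _ h)
          · right; rw [Option.mem_toFinset]; exact Option.mem_def.mpr (hM.1 _ _ h)
        rw [if_pos hvT2]
        rcases hc with h | h <;> rw [h, PFvote_none]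
      · rw [if_neg hc, PFvote_self]
        split_ifs <;> omega
    calc -(T2.card : ℤ) ≤ ∑ v ∈ Finset.univ \ T, (if v ∈ T2 then (-1:ℤ) else 0) := by
          have h1 : (∑ v ∈ Finset.univ \ T, (if v ∈ T2 then (-1:ℤ) else 0))
              = -(((Finset.univ \ T).filter (fun v => v ∈ T2)).card : ℤ) := by
            rw [← Finset.sum_boole]
            rw [← Finset.sum_neg_distrib]
            apply Finset.sum_congr rfl
            intro v _
            split_ifs <;> norm_num
          rw [h1]
          have h2 : ((Finset.univ \ T).filter (fun v => v ∈ T2)).card ≤ T2.card :=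
            Finset.card_le_card (fun x hx => (Finset.mem_filter.1 hx).2)
          omega
      _ ≤ _ := Finset.sum_le_sum hptw
  have hT2card : (T2.card : ℤ) ≤ 2 := by
    have h1 := Finset.card_union_le (f (p 0)).toFinset (f (p n)).toFinset
    have h2 : (f (p 0)).toFinset.card ≤ 1 := by cases f (p 0) <;> simp
    have h3 : (f (p n)).toFinset.card ≤ 1 := by cases f (p n) <;> simp
    rw [hT2]
    exact_mod_cast by omega
  -- total
  have htotal : (0:ℤ) < ∑ v : V, vote rank v (g' v) (f v) := by
    have hsplit := Finset.sum_sdiff (f := fun v => vote rank v (g' v) (f v))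
      (Finset.subset_univ T)
    rw [← hsplit, hsum_img, hpath_sum]
    rcases hstart with ⟨hb0, hn3⟩ | ⟨hf0, -⟩
    · -- structure II : two blocking edges
      have hm2 : 2 ≤ m := by omega
      have hfirst : wE rank f (p (2*0)) (p (2*0+1)) = 2 := by
        have e1 : 2*0 = 0 := by omega
        have e2 : 2*0+1 = 1 := by omega
        rw [e1, e2]
        exact (PFwE_eq_two_iff G rank f hstrict hM hb0.1).2 hb0
      have hsub : ({0, m-1} : Finset ℕ) ⊆ Finset.range m := by
        intro x hx
        rcases Finset.mem_insert.1 hx with h | h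
        · rw [h]; exact Finset.mem_range.2 (by omega)
        · rw [Finset.mem_singleton.1 h]; exact Finset.mem_range.2 (by omega)
      have hge := Finset.sum_le_sum_of_subset_of_nonneg hsub
        (fun j hj _ => hnonneg j hj)
      have hpairsum : (∑ j ∈ ({0, m-1} : Finset ℕ), wE rank f (p (2*j)) (p (2*j+1))) = 4 := by
        rw [Finset.sum_insert (by simp; omega), Finset.sum_singleton, hfirst, hlast]
        norm_num
      rw [hpairsum] at hge
      linarith
    · -- structure III : unmatched start
      have hT2card' : (T2.card : ℤ) ≤ 1 := by
        have h1 := Finset.card_union_le (f (p 0)).toFinset (f (p n)).toFinset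
        have h2 : (f (p 0)).toFinset.card = 0 := by rw [hf0]; simp
        have h3 : (f (p n)).toFinset.card ≤ 1 := by cases f (p n) <;> simp
        rw [hT2]
        exact_mod_cast by omega
      have hsub : ({m-1} : Finset ℕ) ⊆ Finset.range m := by
        intro x hx
        rw [Finset.mem_singleton.1 hx]
        exact Finset.mem_range.2 (by omega)
      have hge := Finset.sum_le_sum_of_subset_of_nonneg hsub
        (fun j hj _ => hnonneg j hj)
      rw [Finset.sum_singleton, hlast] at hge
      linarith
  intro hpop
  exact hpop g' hg'm ((PFmorePopular_iff rank f g').2 htotal)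

/-- Flipping an alternating cycle containing a blocking edge yields a more popular matching. -/
lemma PFflip_cycle (hstrict : StrictPrefs G rank) (hM : IsMatchingOn G f)
    (hI : StructI G rank f) : ¬ PopularM G rank f := by
  obtain ⟨p, n, hAC, i0, hi0n, hblk⟩ := hI
  obtain ⟨hn4, hneven, hpn, hinj, hadjGM, hiff⟩ := hAC
  have hnpar : n % 2 = 0 := Nat.even_iff.1 hneven
  have hf_oddE : ∀ i, i < n → i % 2 = 1 → f (p i) = some (p (i+1)) :=
    fun i hi h2 => (hiff i hi).2 (Nat.odd_iff.2 h2)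
  have hf_evenv : ∀ i, i < n → i % 2 = 0 → 0 < i → f (p i) = some (p (i-1)) := by
    intro i hi h2 hpos
    have h1 := hf_oddE (i-1) (by omega) (by omega)
    have e : i - 1 + 1 = i := by omega
    rw [e] at h1
    exact hM.1 _ _ h1
  have hf_zero : f (p 0) = some (p (n-1)) := by
    have h1 := hf_oddE (n-1) (by omega) (by omega)
    have e : n - 1 + 1 = n := by omega
    rw [e, hpn] at h1
    exact hM.1 _ _ h1
  have hi0e : i0 % 2 = 0 := by
    have hne := hblk.2.1
    have h2 := hiff i0 hi0n
    rcases Nat.even_or_odd i0 with h | h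
    · exact Nat.even_iff.1 h
    · exact absurd (h2.2 h) hne
  classical
  set g' : V → Option V := fun v =>
    if h : ∃ i, i < n ∧ p i = v then
      (if h.choose % 2 = 0 then some (p (h.choose + 1)) else some (p (h.choose - 1)))
    else f v with hg'def
  have hgeval : ∀ k, k < n →
      g' (p k) = if k % 2 = 0 then some (p (k+1)) else some (p (k-1)) := by
    intro k hk
    rw [hg'def]
    simp only []
    rw [dif_pos (⟨k, hk, rfl⟩ : ∃ i, i < n ∧ p i = p k)]
    have hch := (⟨k, hk, rfl⟩ : ∃ i, i < n ∧ p i = p k).choose_spec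
    have heq : (⟨k, hk, rfl⟩ : ∃ i, i < n ∧ p i = p k).choose = k :=
      hinj _ _ hch.1 hk hch.2
    rw [heq]
  have hgoff : ∀ v, (¬ ∃ i, i < n ∧ p i = v) → g' v = f v := by
    intro v hv
    rw [hg'def]
    simp only []
    rw [dif_neg hv]
  have hg'm : IsMatchingOn G g' := by
    constructor
    · intro v w h
      by_cases hv : ∃ i, i < n ∧ p i = v
      · obtain ⟨k, hk, rfl⟩ := hv
        rw [hgeval k hk] at h
        rcases Nat.mod_two_eq_zero_or_one k with h2 | h2
        · rw [if_pos h2] at h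
          have hw : w = p (k+1) := (Option.some.inj h).symm
          have hk1 : k + 1 < n := by omega
          rw [hw, hgeval (k+1) hk1, if_neg (by omega)]
          rfl
        · rw [if_neg (by omega)] at h
          have hw : w = p (k-1) := (Option.some.inj h).symm
          have hk1 : k - 1 < n := by omega
          rw [hw, hgeval (k-1) hk1, if_pos (by omega)]
          have e : k - 1 + 1 = k := by omega
          rw [e]
      · rw [hgoff v hv] at h
        have hfwv : f w = some v := hM.1 v w h
        have hwoff : ¬ ∃ i, i < n ∧ p i = w := by
          rintro ⟨i, hi, rfl⟩
          rcases Nat.mod_two_eq_zero_or_one i with h4 | h4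
          · rcases Nat.eq_zero_or_pos i with h5 | h5
            · rw [h5, hf_zero] at hfwv
              exact hv ⟨n-1, by omega, Option.some.inj hfwv⟩
            · rw [hf_evenv i hi h4 h5] at hfwv
              exact hv ⟨i-1, by omega, Option.some.inj hfwv⟩
          · rw [hf_oddE i hi h4] at hfwv
            rcases (show i + 1 < n ∨ i + 1 = n by omega) with h5 | h5
            · exact hv ⟨i+1, h5, Option.some.inj hfwv⟩
            · rw [h5, hpn] at hfwv
              exact hv ⟨0, by omega, Option.some.inj hfwv⟩
        rw [hgoff w hwoff]
        exact hfwv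
    · intro v w h
      by_cases hv : ∃ i, i < n ∧ p i = v
      · obtain ⟨k, hk, rfl⟩ := hv
        rw [hgeval k hk] at h
        rcases Nat.mod_two_eq_zero_or_one k with h2 | h2
        · rw [if_pos h2] at h
          rw [← Option.some.inj h]
          exact (hadjGM k hk).1
        · rw [if_neg (by omega)] at h
          rw [← Option.some.inj h]
          have hadj := (hadjGM (k-1) (by omega)).1
          have e : k - 1 + 1 = k := by omega
          rw [e] at hadj
          exact hadj.symm
      · rw [hgoff v hv] at h
        exact hM.2 v w h
  set T := (Finset.range n).image p with hT
  have hsum_img : (∑ v ∈ T, vote rank v (g' v) (f v))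
      = ∑ k ∈ Finset.range n, vote rank (p k) (g' (p k)) (f (p k)) := by
    apply Finset.sum_image
    intro i hi j hj he
    exact hinj i j (Finset.mem_range.1 hi) (Finset.mem_range.1 hj) he
  set m := n / 2 with hm
  have hnm : n = 2 * m := by omega
  have hpath_sum : (∑ k ∈ Finset.range n, vote rank (p k) (g' (p k)) (f (p k)))
      = ∑ j ∈ Finset.range m, wE rank f (p (2*j)) (p (2*j+1)) := by
    rw [hnm]
    apply PFsum_pair
    intro j hj
    have h1 := hgeval (2*j) (by omega)
    have h2 := hgeval (2*j+1) (by omega)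
    rw [if_pos (by omega)] at h1
    rw [if_neg (by omega)] at h2
    have e : 2*j+1-1 = 2*j := by omega
    rw [e] at h2
    rw [h1, h2]
    rfl
  have hnonneg : ∀ j ∈ Finset.range m, (0:ℤ) ≤ wE rank f (p (2*j)) (p (2*j+1)) := by
    intro j hj
    have hjm := Finset.mem_range.1 hj
    have hadj := hadjGM (2*j) (by omega)
    rcases PFwE_cases G rank f hstrict hM hadj.1 with h | h | h
    · exact absurd h hadj.2
    · omega
    · omega
  have hblk2 : wE rank f (p (2*(i0/2))) (p (2*(i0/2)+1)) = 2 := by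
    have e1 : 2*(i0/2) = i0 := by omega
    rw [e1]
    exact (PFwE_eq_two_iff G rank f hstrict hM (hadjGM i0 hi0n).1).2 hblk
  have hoff0 : (∑ v ∈ Finset.univ \ T, vote rank v (g' v) (f v)) = 0 := by
    apply Finset.sum_eq_zero
    intro v hv
    have hvoff : ¬ ∃ i, i < n ∧ p i = v := by
      rintro ⟨i, hi, rfl⟩
      exact (Finset.mem_sdiff.1 hv).2
        (Finset.mem_image.2 ⟨i, Finset.mem_range.2 hi, rfl⟩)
    rw [hgoff v hvoff]
    exact PFvote_self rank v (f v)
  have htotal : (0:ℤ) < ∑ v : V, vote rank v (g' v) (f v) := by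
    have hsplit := Finset.sum_sdiff (f := fun v => vote rank v (g' v) (f v))
      (Finset.subset_univ T)
    rw [← hsplit, hoff0, hsum_img, hpath_sum]
    have hsub : ({i0/2} : Finset ℕ) ⊆ Finset.range m := by
      intro x hx
      rw [Finset.mem_singleton.1 hx]
      exact Finset.mem_range.2 (by omega)
    have hge := Finset.sum_le_sum_of_subset_of_nonneg hsub
      (fun j hj _ => hnonneg j hj)
    rw [Finset.sum_singleton, hblk2] at hge
    linarith
  intro hpop
  exact hpop g' hg'm ((PFmorePopular_iff rank f g').2 htotal)

end PFaux2


/-- M is popular iff G_M contains no blocking structure: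
(i) alternating cycle with a blocking edge, (ii) alternating path whose first and
last edges are disjoint blocking edges, (iii) alternating path from an unmatched
node ending in a blocking edge. -/
theorem popular_iff_no_blocking_structure {V : Type*} [Fintype V] [DecidableEq V]
    (G : SimpleGraph V) (rank : V → V → ℕ) (hstrict : StrictPrefs G rank)
    (f : V → Option V) (hM : IsMatchingOn G f) :
    PopularM G rank f ↔
      ¬ (StructI G rank f ∨ StructII G rank f ∨ StructIII G rank f) := by
  constructor
  · intro hpop
    rintro (hI | hII | hIII)
    · exact PFflip_cycle G rank f hstrict hM hI hpop
    · obtain ⟨p, n, h3, hAP, hb0, hbe⟩ := hII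
      exact PFflip_path G rank f hstrict hM p n hAP (Or.inl ⟨hb0, h3⟩) hbe hpop
    · obtain ⟨p, n, h1, hAP, hf0, hbe⟩ := hIII
      exact PFflip_path G rank f hstrict hM p n hAP (Or.inr ⟨hf0, h1⟩) hbe hpop
  · intro hno g hg hmp
    push_neg at hno
    rw [PFmorePopular_iff] at hmp
    have hbound := PFmain_bound G rank f hstrict hM hno.1 hno.2.1 hno.2.2
      ((Finset.univ.filter (fun v => g v ≠ f v)).card) g hg (le_refl _)
    linarith
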